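/- arXiv:2302.01314 — 4 statements merged into one kernel-verified Lean document; each statement's English description precedes it below -/
import Mathlib

section
/- The region R(p_K,W) is a closed convex subset of the nonnegative quadrant ℝ₊² = {(R_A,R) : R_A ≥ 0, R ≥ 0}. -/
open scoped BigOperators
open Real Classical

namespace SCA

noncomputable section

/-- `p` is a probability distribution on the finite type `A`. -/
def IsDist {A : Type} [Fintype A] (p : A → ℝ) : Prop :=
  (∀ a, 0 ≤ p a) ∧ ∑ a, p a = 1

/-- `W` is a (stochastic-matrix) channel from `A` to `B`. -/
def IsChannel {A B : Type} [Fintype A] [Fintype B] (W : A → B → ℝ) : Prop :=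
  ∀ a, IsDist (W a)

/-- Shannon entropy (natural logarithm). -/
def ent {A : Type} [Fintype A] (p : A → ℝ) : ℝ :=
  ∑ a, Real.negMulLog (p a)

/-- Kullback–Leibler divergence between finitely supported distributions. -/
def relEnt {A : Type} [Fintype A] (q p : A → ℝ) : ℝ :=
  ∑ a, q a * Real.log (q a / p a)

/-- First marginal of a joint distribution on `A × B`. -/
def fst2 {A B : Type} [Fintype A] [Fintype B] (p : A × B → ℝ) : A → ℝ :=
  fun a => ∑ b, p (a, b)

/-- Second marginal of a joint distribution on `A × B`. -/
def snd2 {A B : Type} [Fintype A] [Fintype B] (p : A × B → ℝ) : B → ℝ :=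
  fun b => ∑ a, p (a, b)

/-- Mutual information `I(A;B)` of a joint distribution on `A × B`. -/
def mutInfo {A B : Type} [Fintype A] [Fintype B] (p : A × B → ℝ) : ℝ :=
  ent (fst2 p) + ent (snd2 p) - ent p

/-- Conditional entropy `H(B|A)` of a joint distribution on `A × B`. -/
def condEnt {A B : Type} [Fintype A] [Fintype B] (p : A × B → ℝ) : ℝ :=
  ent p - ent (fst2 p)

section Triple

variable {U Z X : Type} [Fintype U] [Fintype Z] [Fintype X]

/-- `(U,Z)`-marginal of a joint distribution on `U × Z × K`. -/
def margUZ (q : U × Z × X → ℝ) : U × Z → ℝ := fun p => ∑ k, q (p.1, p.2, k)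

/-- `(U,K)`-marginal of a joint distribution on `U × Z × K`. -/
def margUK (q : U × Z × X → ℝ) : U × X → ℝ := fun p => ∑ z, q (p.1, z, p.2)

/-- `(Z,K)`-marginal of a joint distribution on `U × Z × K`. -/
def margZK (q : U × Z × X → ℝ) : Z × X → ℝ := fun p => ∑ u, q (u, p.1, p.2)

/-- `U`-marginal. -/
def margU (q : U × Z × X → ℝ) : U → ℝ := fun u => ∑ z, ∑ k, q (u, z, k)

/-- `Z`-marginal. -/
def margZ (q : U × Z × X → ℝ) : Z → ℝ := fun z => ∑ u, ∑ k, q (u, z, k)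

/-- `K`-marginal. -/
def margK (q : U × Z × X → ℝ) : X → ℝ := fun k => ∑ u, ∑ z, q (u, z, k)

/-- Markov chain condition `U ↔ Z ↔ K` for a joint distribution on `U × Z × K`:
`U` and `K` are conditionally independent given `Z`. -/
def Markov (q : U × Z × X → ℝ) : Prop :=
  ∀ u z k, q (u, z, k) * margZ q z = margUZ q (u, z) * margZK q (z, k)

end Triple

/-- The region `𝓡(p_K, W)`: the union over all joint distributions `p_{UZK}` with
`|𝓤| ≤ |𝓩| + 1`, Markov chain `U ↔ Z ↔ K` and `(Z,K)`-marginal `p_{KZ}`, of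
`{(R_A, R) ∈ ℝ₊² : R_A ≥ I(Z;U), R ≥ H(K|U)}`. -/
def Region {X Z : Type} [Fintype X] [Fintype Z] (pK : X → ℝ) (W : X → Z → ℝ) :
    Set (ℝ × ℝ) :=
  { r | ∃ m : ℕ, m ≤ Fintype.card Z + 1 ∧ ∃ q : Fin m × Z × X → ℝ,
      IsDist q ∧ Markov q ∧ (∀ z k, margZK q (z, k) = pK k * W k z) ∧
      0 ≤ r.1 ∧ 0 ≤ r.2 ∧ mutInfo (margUZ q) ≤ r.1 ∧ condEnt (margUK q) ≤ r.2 }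

/-- The reliability exponent `E(R|p_X)`:
minimum over distributions `p̄` of `[R − H(p̄)]⁺ + D(p̄‖p_X)`. -/
def Eexp {X : Type} [Fintype X] (R : ℝ) (pX : X → ℝ) : ℝ :=
  sInf { y | ∃ q : X → ℝ, IsDist q ∧ (∀ x, pX x = 0 → q x = 0) ∧
    y = max (R - ent q) 0 + relEnt q pX }

/-- i.i.d. (product) distribution on `n`-sequences. -/
def iid {A : Type} [Fintype A] (p : A → ℝ) (n : ℕ) : (Fin n → A) → ℝ :=
  fun x => ∏ i, p (x i)

/-- Memoryless channel `W^n`. -/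
def wn {X Z : Type} (W : X → Z → ℝ) {n : ℕ} (k : Fin n → X) (z : Fin n → Z) : ℝ :=
  ∏ i, W (k i) (z i)

/-- Joint distribution `p_{K^n Z^n}(k,z) = p_K^n(k) W^n(z|k)`. -/
def muKZ {X Z : Type} [Fintype X] (pK : X → ℝ) (W : X → Z → ℝ) {n : ℕ}
    (k : Fin n → X) (z : Fin n → Z) : ℝ :=
  iid pK n k * wn W k z

/-- The affine encoder `φ⁽ⁿ⁾(k) = kA ⊕ bᵐ`. -/
def affEnc {X : Type} [Field X] [Fintype X] {n m : ℕ}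
    (A : Matrix (Fin n) (Fin m) X) (b : Fin m → X) : (Fin n → X) → (Fin m → X) :=
  fun k => Matrix.vecMul k A + b

/-- The linear part `φ⁰(x) = xA` of the affine encoder. -/
def linEnc {X : Type} [Field X] [Fintype X] {n m : ℕ}
    (A : Matrix (Fin n) (Fin m) X) : (Fin n → X) → (Fin m → X) :=
  fun x => Matrix.vecMul x A

/-- Decoding error probability `p_e(φ⁰, ψ⁽ⁿ⁾ | p_X^n) = Pr[ψ⁽ⁿ⁾(φ⁰(Xⁿ)) ≠ Xⁿ]`. -/
def perr {X : Type} [Field X] [Fintype X] {n m : ℕ}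
    (A : Matrix (Fin n) (Fin m) X) (ψ : (Fin m → X) → (Fin n → X)) (pX : X → ℝ) : ℝ :=
  ∑ x : Fin n → X, if ψ (linEnc A x) = x then 0 else iid pX n x

/-- Information leakage `Δ⁽ⁿ⁾ = I(Xⁿ; φ⁽ⁿ⁾(Xⁿ ⊕ Kⁿ), φ_A⁽ⁿ⁾(Zⁿ))`, computed from the joint
distribution of `(Xⁿ, (C̃ᵐ, M_A))` where `Xⁿ ⊥ (Kⁿ, Zⁿ)`. -/
def leakage {X Z M : Type} [Field X] [Fintype X] [Fintype Z] [Fintype M] {n m : ℕ}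
    (A : Matrix (Fin n) (Fin m) X) (b : Fin m → X) (φA : (Fin n → Z) → M)
    (pX pK : X → ℝ) (W : X → Z → ℝ) : ℝ :=
  mutInfo (fun p : (Fin n → X) × ((Fin m → X) × M) =>
    iid pX n p.1 * ∑ k : Fin n → X, ∑ z : Fin n → Z,
      if affEnc A b (p.1 + k) = p.2.1 ∧ φA z = p.2.2 then muKZ pK W k z else 0)

section Exponents

variable {X Z : Type} [Fintype X] [Fintype Z]

/-- `ω_{q|p_Z}^{(μ,α)}(z,k|u)`. -/
def omegaF {U : Type} [Fintype U] (μ α : ℝ) (pZb : Z → ℝ) (q : U × Z × X → ℝ)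
    (u : U) (z : Z) (k : X) : ℝ :=
  (1 - α) * Real.log (margZ q z / pZb z) +
    α * (μ * Real.log ((margUZ q (u, z) / margU q u) / pZb z) +
         (1 - μ) * Real.log (1 / (margUK q (u, k) / margU q u)))

/-- `Ω^{(μ,α)}(q|p_Z) = − log E_q[exp(−ω_{q|p_Z}^{(μ,α)}(Z,K|U))]`. -/
def OmegaQ {U : Type} [Fintype U] (μ α : ℝ) (pZb : Z → ℝ) (q : U × Z × X → ℝ) : ℝ :=
  - Real.log (∑ u, ∑ z, ∑ k, q (u, z, k) * Real.exp (-(omegaF μ α pZb q u z k)))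

/-- The condition `q_{K|Z} = p_{K̄|Z̄}` for a joint distribution `p_{K̄Z̄}` on `𝓚 × 𝓩`. -/
def CondMatch {U : Type} [Fintype U] (pbar : X × Z → ℝ) (q : U × Z × X → ℝ) : Prop :=
  ∀ z k, margZK q (z, k) * snd2 pbar z = margZ q z * pbar (k, z)

/-- `Ω^{(μ,α)}(p_{K̄Z̄}) = min_{q ∈ 𝓠(p_{K̄|Z̄})} Ω^{(μ,α)}(q | p_Z̄)`, with `|𝓤| ≤ |𝓩|`. -/
def BigOmega (μ α : ℝ) (pbar : X × Z → ℝ) : ℝ :=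
  sInf { y | ∃ m : ℕ, m ≤ Fintype.card Z ∧ ∃ q : Fin m × Z × X → ℝ,
    IsDist q ∧ Markov q ∧ CondMatch pbar q ∧ y = OmegaQ μ α (snd2 pbar) q }

/-- `F(R_A, R | p_{K̄Z̄}) = sup_{(μ,α)∈[0,1]²} (Ω^{(μ,α)} − α(μR_A + μ̄R))/(2 + αμ̄)`. -/
def Ffun (RA R : ℝ) (pbar : X × Z → ℝ) : ℝ :=
  sSup { y | ∃ μ ∈ Set.Icc (0:ℝ) 1, ∃ α ∈ Set.Icc (0:ℝ) 1,
    y = (BigOmega μ α pbar - α * (μ * RA + (1 - μ) * R)) / (2 + α * (1 - μ)) }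

/-- `G(R_A, R | p_{K̄Z̄}) = sup_{(μ,α)∈[0,1]²} (Ω^{(μ,α)} − α(μR_A + μ̄R))/(2 + 3αμ̄)`. -/
def Gfun (RA R : ℝ) (pbar : X × Z → ℝ) : ℝ :=
  sSup { y | ∃ μ ∈ Set.Icc (0:ℝ) 1, ∃ α ∈ Set.Icc (0:ℝ) 1,
    y = (BigOmega μ α pbar - α * (μ * RA + (1 - μ) * R)) / (2 + 3 * α * (1 - μ)) }

/-- The joint distribution `p_{KZ}(k,z) = p_K(k) W(z|k)` on `𝓚 × 𝓩`. -/
def pJoint (pK : X → ℝ) (W : X → Z → ℝ) : X × Z → ℝ :=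
  fun p => pK p.1 * W p.1 p.2

/-- `G(R_A, R | p_K, W) = min_{p_{K̄Z̄}} { G(R_A, R | p_{K̄Z̄}) + D(p_{K̄Z̄}‖p_{KZ}) }`. -/
def GfunKW (RA R : ℝ) (pK : X → ℝ) (W : X → Z → ℝ) : ℝ :=
  sInf { y | ∃ pbar : X × Z → ℝ, IsDist pbar ∧
    (∀ p, pJoint pK W p = 0 → pbar p = 0) ∧
    y = Gfun RA R pbar + relEnt pbar (pJoint pK W) }

end Exponents

section Types

/-- The type (empirical distribution) of a sequence. -/
def typeOf {S : Type} {n : ℕ} (x : Fin n → S) : S → ℝ :=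
  fun s => (({i | x i = s} : Set (Fin n)).ncard : ℝ) / n

/-- The joint type (empirical joint distribution) of a pair of sequences. -/
def jointType {X Z : Type} {n : ℕ} (k : Fin n → X) (z : Fin n → Z) : X × Z → ℝ :=
  fun p => (({i | k i = p.1 ∧ z i = p.2} : Set (Fin n)).ncard : ℝ) / n

/-- `p` is a joint type of length `n`, i.e. `p ∈ 𝓟_n(𝓧 × 𝓩)`. -/
def IsJointType {X Z : Type} (n : ℕ) (p : X × Z → ℝ) : Prop :=
  ∃ (k : Fin n → X) (z : Fin n → Z), jointType k z = p

variable {X Z M : Type} [Fintype X] [Fintype Z] [Fintype M]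

/-- i.i.d. distribution on pairs of sequences. -/
def iid2 (pbar : X × Z → ℝ) {n : ℕ} (k : Fin n → X) (z : Fin n → Z) : ℝ :=
  ∏ i, pbar (k i, z i)

/-- The quantity `Υ(R, φ_A⁽ⁿ⁾ | p_{K̄Z̄})`. -/
def Upsilon {n : ℕ} (R : ℝ) (φA : (Fin n → Z) → M) (pbar : X × Z → ℝ) : ℝ :=
  ∑ a : M, ∑ k : Fin n → X,
    if typeOf k = fst2 pbar then
      ((({z | φA z = a ∧ jointType k z = pbar} : Set (Fin n → Z)).ncard : ℝ) /
        (({p : (Fin n → X) × (Fin n → Z) | jointType p.1 p.2 = pbar} :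
            Set ((Fin n → X) × (Fin n → Z))).ncard : ℝ)) *
      Real.log (1 + (Real.exp (n * R) - 1) *
        ((({z | φA z = a ∧ jointType k z = pbar} : Set (Fin n → Z)).ncard : ℝ) *
          (({k' : Fin n → X | typeOf k' = fst2 pbar} : Set (Fin n → X)).ncard : ℝ)) /
        ((({z | φA z = a ∧ typeOf z = snd2 pbar} : Set (Fin n → Z)).ncard : ℝ) *
          (({p : (Fin n → X) × (Fin n → Z) | jointType p.1 p.2 = pbar} :
              Set ((Fin n → X) × (Fin n → Z))).ncard : ℝ)))
    else 0

/-- `Υ(R, φ_A⁽ⁿ⁾ | p^n_{K̄Z̄}) = Σ_{p̂} Pr{M⁽ⁿ⁾ = p̂} Υ(R, φ_A⁽ⁿ⁾ | p̂)` where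
`(Kⁿ, Zⁿ) ∼ p^n_{K̄Z̄}` i.i.d. and `M⁽ⁿ⁾` is the random joint type, written as an
expectation over `(Kⁿ, Zⁿ)`. -/
def UpsilonIID {n : ℕ} (R : ℝ) (φA : (Fin n → Z) → M) (pbar : X × Z → ℝ) : ℝ :=
  ∑ k : Fin n → X, ∑ z : Fin n → Z, iid2 pbar k z * Upsilon R φA (jointType k z)

end Types

/-- `ζ(φ⁽ⁿ⁾, φ_A⁽ⁿ⁾ | p_{K̄Z̄})`: the conditional divergence
`D(p_{K̃ᵐ | M_A⁽ⁿ⁾, M⁽ⁿ⁾ = p_{K̄Z̄}} ‖ p_{Vᵐ} | p_{M_A⁽ⁿ⁾ | M⁽ⁿ⁾ = p_{K̄Z̄}})`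
of the distribution of `K̃ᵐ = φ⁽ⁿ⁾(Kⁿ)` given `M_A⁽ⁿ⁾` from uniform, conditioned on
the event that the joint type of `(Kⁿ, Zⁿ)` is `p_{K̄Z̄}`. -/
def zeta {X Z M : Type} [Field X] [Fintype X] [Fintype Z] [Fintype M] {n m : ℕ}
    (A : Matrix (Fin n) (Fin m) X) (b : Fin m → X) (φA : (Fin n → Z) → M)
    (pK : X → ℝ) (W : X → Z → ℝ) (pbar : X × Z → ℝ) : ℝ :=
  let PE : ℝ := ∑ k : Fin n → X, ∑ z : Fin n → Z,
    if jointType k z = pbar then muKZ pK W k z else 0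
  let J : (Fin m → X) × M → ℝ := fun ca =>
    (∑ k : Fin n → X, ∑ z : Fin n → Z,
      if jointType k z = pbar ∧ affEnc A b k = ca.1 ∧ φA z = ca.2
      then muKZ pK W k z else 0) / PE
  ∑ ca : (Fin m → X) × M,
    J ca * Real.log (J ca / (∑ c', J (c', ca.2)) * (Fintype.card X : ℝ) ^ m)

/-!
An admissible `p_{UZK}` is determined by the law `w` of `U` and the conditional laws `r u` of `Z`
given `U = u`, subject only to `∑ u, w u • r u = p_Z`; in these coordinates
`I(Z;U) = H(p_Z) - ∑ u, w u * H(r u)` and `H(K|U) = ∑ u, w u * H(r u ∘ p_{K|Z})` are linear in `w`.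
Hence the region is the quadrant intersected with `A + ℝ₊²`, where `A` is the continuous image of a
compact set of pairs `(w, r)`, so it is closed. For convexity, concatenate the two families with
weights `a` and `b`. The result may have up to `2(|Z| + 1)` letters, but fixing `∑ u, w u • r u` and
`∑ u, w u * H(r u)` imposes only `|Z| + 1` linear conditions on `w`; moving `w` along their kernel,
in the direction that does not increase `H(K|U)`, shrinks its support to `|Z| + 1` letters.
-/

open scoped Pointwise
open Finset Module

section Reduction

variable {J V : Type*} [Fintype J] [AddCommGroup V] [Module ℝ V]

theorem exists_add_smul_nonneg_card_support_lt {w d : J → ℝ} (hw : 0 ≤ w)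
    (hd : ∀ j, w j = 0 → d j = 0) (hneg : ∃ j, d j < 0) :
    ∃ t : ℝ, 0 ≤ t ∧ 0 ≤ w + t • d ∧ #{j | (w + t • d) j ≠ 0} < #{j | w j ≠ 0} := by
  obtain ⟨j₀, hj₀, hmin⟩ := exists_min_image {j | d j < 0} (fun j => w j / -d j)
    (by simpa [Finset.Nonempty] using hneg)
  -- ratio test: `w j₀ / -d j₀` is the largest step keeping `w + t • d` nonnegative
  have hd₀ : 0 < -d j₀ := neg_pos.2 (mem_filter.1 hj₀).2
  refine ⟨w j₀ / -d j₀, div_nonneg (hw j₀) hd₀.le, fun j => ?_, card_lt_card ?_⟩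
  · rcases lt_or_ge (d j) 0 with hj | hj
    · have := (le_div_iff₀ (neg_pos.2 hj)).1 (hmin j (by simpa using hj))
      simp only [Pi.zero_apply, Pi.add_apply, Pi.smul_apply, smul_eq_mul]
      linarith
    · simp only [Pi.zero_apply, Pi.add_apply, Pi.smul_apply, smul_eq_mul]
      exact add_nonneg (hw j) (mul_nonneg (div_nonneg (hw j₀) hd₀.le) hj)
  · refine (ssubset_iff_of_subset fun j hj => ?_).2 ⟨j₀, ?_, ?_⟩
    · simp only [mem_filter, mem_univ, true_and] at hj ⊢
      exact fun hw₀ => hj (by simp [hw₀, hd j hw₀])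
    · simpa using fun hw₀ => hd₀.ne' (by simp [hd j₀ hw₀])
    · simp only [mem_filter, mem_univ, true_and, not_not, Pi.add_apply, Pi.smul_apply,
        smul_eq_mul]
      rw [div_neg, neg_mul, div_mul_cancel₀ _ (neg_ne_zero.1 hd₀.ne'), add_neg_cancel]

theorem exists_linear_relation_of_finrank_lt_card [FiniteDimensional ℝ V] (f : J → V)
    {s : Finset J} (hs : finrank ℝ V < #s) :
    ∃ d : J → ℝ, d ≠ 0 ∧ (∀ j ∉ s, d j = 0) ∧ ∑ j, d j • f j = 0 := by
  classical
  have hdep : ¬LinearIndepOn ℝ f (s : Set J) := fun hli => by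
    have := hli.fintype_card_le_finrank
    simp only [Finset.coe_sort_coe, Fintype.card_coe] at this
    omega
  simp only [linearIndepOn_finset_iff, not_forall] at hdep
  obtain ⟨g, hg, i, hi, hgi⟩ := hdep
  refine ⟨fun j => if j ∈ s then g j else 0, fun h => hgi ?_, fun j hj => if_neg hj, ?_⟩
  · simpa [hi] using congrFun h i
  · simpa [ite_smul, Finset.sum_ite_mem] using hg

theorem exists_descent_direction [FiniteDimensional ℝ V] {f : J → V} {φ : V →ₗ[ℝ] ℝ}
    (hφ : ∀ j, φ (f j) = 1) (c : J → ℝ) {s : Finset J} (hs : finrank ℝ V < #s) :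
    ∃ d : J → ℝ, (∀ j ∉ s, d j = 0) ∧ ∑ j, d j • f j = 0 ∧ ∑ j, d j * c j ≤ 0 ∧
      ∃ j, d j < 0 := by
  obtain ⟨d, hd0, hds, hdf⟩ := exists_linear_relation_of_finrank_lt_card f hs
  -- `φ` is `1` on every `f j`, so the coefficients of a relation sum to zero.
  have hsum : ∑ j, d j = 0 := by simpa [map_sum, hφ] using congrArg φ hdf
  have hneg : ∀ e : J → ℝ, e ≠ 0 → ∑ j, e j = 0 → ∃ j, e j < 0 := fun e he hes => by
    by_contra! hpos
    exact he (funext fun j => (sum_eq_zero_iff_of_nonneg fun j _ => hpos j).1 hes j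
      (mem_univ j))
  rcases le_total (∑ j, d j * c j) 0 with hc | hc
  · exact ⟨d, hds, hdf, hc, hneg d hd0 hsum⟩
  · refine ⟨-d, fun j hj => by simp [hds j hj], by simp [hdf], by simpa using hc,
      hneg (-d) (neg_ne_zero.2 hd0) (by simp [hsum])⟩

theorem exists_nonneg_card_support_le_finrank [FiniteDimensional ℝ V] {f : J → V}
    {φ : V →ₗ[ℝ] ℝ} (hφ : ∀ j, φ (f j) = 1) (c : J → ℝ) {w : J → ℝ} (hw : 0 ≤ w) :
    ∃ w' : J → ℝ, 0 ≤ w' ∧ #{j | w' j ≠ 0} ≤ finrank ℝ V ∧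
      ∑ j, w' j • f j = ∑ j, w j • f j ∧ ∑ j, w' j * c j ≤ ∑ j, w j * c j := by
  induction hn : #{j | w j ≠ 0} using Nat.strong_induction_on generalizing w with
  | _ n ih =>
  by_cases hle : n ≤ finrank ℝ V
  · exact ⟨w, hw, hn ▸ hle, rfl, le_rfl⟩
  obtain ⟨d, hds, hdf, hdc, hneg⟩ := exists_descent_direction hφ c (hn ▸ not_le.1 hle)
  obtain ⟨t, ht, hw₂, hlt⟩ := exists_add_smul_nonneg_card_support_lt hw
    (fun j hj => hds j (by simpa using hj)) hneg
  obtain ⟨w', hw', hcard, hf, hc⟩ := ih _ (hn ▸ hlt) hw₂ rfl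
  refine ⟨w', hw', hcard, ?_, ?_⟩
  · simp [hf, add_smul, sum_add_distrib, mul_smul, ← smul_sum, hdf]
  · have : ∑ j, (w + t • d) j * c j = ∑ j, w j * c j + t * ∑ j, d j * c j := by
      simp [add_mul, sum_add_distrib, mul_sum, mul_assoc]
    linarith [mul_nonpos_of_nonneg_of_nonpos ht hdc]

end Reduction

section Distributions

variable {A B : Type} [Fintype A] [Fintype B]

theorem isDist_fst2 {p : A × B → ℝ} (hp : IsDist p) : IsDist (fst2 p) :=
  ⟨fun a => sum_nonneg fun b _ => hp.1 (a, b), by rw [← hp.2, Fintype.sum_prod_type]; rfl⟩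

theorem isDist_snd2 {p : A × B → ℝ} (hp : IsDist p) : IsDist (snd2 p) :=
  ⟨fun b => sum_nonneg fun a _ => hp.1 (a, b), by
    rw [← hp.2, Fintype.sum_prod_type_right]; rfl⟩

theorem IsDist.eq_zero_of_fst2_eq_zero {p : A × B → ℝ} (hp : IsDist p) {a : A}
    (ha : fst2 p a = 0) (b : B) : p (a, b) = 0 :=
  (sum_eq_zero_iff_of_nonneg fun b _ => hp.1 (a, b)).1 ha b (mem_univ b)

theorem IsDist.eq_zero_of_snd2_eq_zero {p : A × B → ℝ} (hp : IsDist p) {b : B}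
    (hb : snd2 p b = 0) (a : A) : p (a, b) = 0 :=
  (sum_eq_zero_iff_of_nonneg fun a _ => hp.1 (a, b)).1 hb a (mem_univ a)

/-- The conditional law of the second coordinate given the first; at atoms of probability
zero it is set to the second marginal, so that it is a distribution everywhere. -/
def condDist (p : A × B → ℝ) (a : A) : B → ℝ :=
  if fst2 p a = 0 then snd2 p else fun b => p (a, b) / fst2 p a

theorem isDist_condDist {p : A × B → ℝ} (hp : IsDist p) (a : A) : IsDist (condDist p a) := by
  unfold condDist
  split_ifs with ha
  · exact isDist_snd2 hp
  · refine ⟨fun b => div_nonneg (hp.1 _) ((isDist_fst2 hp).1 a), ?_⟩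
    rw [← sum_div]
    exact div_self ha

theorem fst2_mul_condDist {p : A × B → ℝ} (hp : IsDist p) (a : A) (b : B) :
    fst2 p a * condDist p a b = p (a, b) := by
  unfold condDist
  split_ifs with ha
  · rw [ha, zero_mul, hp.eq_zero_of_fst2_eq_zero ha]
  · exact mul_div_cancel₀ _ ha

theorem ent_mul_of_sum_eq_one (u : A → ℝ) {v : A → B → ℝ} (hv : ∀ a, ∑ b, v a b = 1) :
    ent (fun x : A × B => u x.1 * v x.1 x.2) = ent u + ∑ a, u a * ent (v a) := by
  simp only [ent, Fintype.sum_prod_type, negMulLog_mul, sum_add_distrib, ← sum_mul, hv,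
    one_mul, mul_sum]

theorem fst2_mul_of_sum_eq_one (u : A → ℝ) {v : A → B → ℝ} (hv : ∀ a, ∑ b, v a b = 1) :
    fst2 (fun x : A × B => u x.1 * v x.1 x.2) = u := by
  funext a
  simp [fst2, ← mul_sum, hv]

end Distributions

section Mixture

variable {J Z X : Type} [Fintype Z] [Fintype X] {P : Z × X → ℝ} {w : J → ℝ} {r : J → Z → ℝ}

/-- The law of `K` when `Z` has law `ρ` and `K` given `Z` is drawn according to `P`. -/
def outputDist (P : Z × X → ℝ) (ρ : Z → ℝ) : X → ℝ := ∑ z, ρ z • condDist P z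

def mixtureJoint (P : Z × X → ℝ) (w : J → ℝ) (r : J → Z → ℝ) : J × Z × X → ℝ :=
  fun x => w x.1 * r x.1 x.2.1 * condDist P x.2.1 x.2.2

theorem isDist_outputDist (hP : IsDist P) {ρ : Z → ℝ} (hρ : IsDist ρ) :
    IsDist (outputDist P ρ) :=
  (convex_stdSimplex ℝ X).sum_mem (fun z _ => hρ.1 z) hρ.2 fun z _ => isDist_condDist hP z

theorem margUZ_mixtureJoint (hP : IsDist P) :
    margUZ (mixtureJoint P w r) = fun x => w x.1 * r x.1 x.2 := by
  funext x
  simp [margUZ, mixtureJoint, ← mul_sum, (isDist_condDist hP _).2]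

theorem margUK_mixtureJoint :
    margUK (mixtureJoint P w r) = fun x => w x.1 * outputDist P (r x.1) x.2 := by
  funext x
  simp [margUK, mixtureJoint, outputDist, mul_sum, mul_assoc]

variable [Fintype J] {p : Z → ℝ}

structure IsMixture (p : Z → ℝ) (w : J → ℝ) (r : J → Z → ℝ) : Prop where
  nonneg : 0 ≤ w
  isDist : ∀ j, IsDist (r j)
  sum_smul : ∑ j, w j • r j = p

theorem IsMixture.sum_mul_apply (h : IsMixture p w r) (z : Z) : ∑ j, w j * r j z = p z := by
  simpa using congrFun h.sum_smul z

theorem IsMixture.sum_eq (h : IsMixture p w r) : ∑ j, w j = ∑ z, p z := by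
  simp_rw [← h.sum_mul_apply, sum_comm (γ := Z), ← mul_sum, (h.isDist _).2, mul_one]

/-- The pair `(I(Z;U), H(K|U))` for the joint law `mixtureJoint P w r`. -/
def mixtureRates (P : Z × X → ℝ) (w : J → ℝ) (r : J → Z → ℝ) : ℝ × ℝ :=
  (ent (fst2 P) - ∑ j, w j * ent (r j), ∑ j, w j * ent (outputDist P (r j)))

theorem margZ_mixtureJoint (hP : IsDist P) (h : IsMixture (fst2 P) w r) :
    margZ (mixtureJoint P w r) = fst2 P := by
  funext z
  change ∑ j, margUZ (mixtureJoint P w r) (j, z) = _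
  simp only [margUZ_mixtureJoint hP, h.sum_mul_apply]

theorem margZK_mixtureJoint (hP : IsDist P) (h : IsMixture (fst2 P) w r) (z : Z) (k : X) :
    margZK (mixtureJoint P w r) (z, k) = P (z, k) := by
  simp only [margZK, mixtureJoint, ← sum_mul, h.sum_mul_apply, fst2_mul_condDist hP]

theorem isDist_mixtureJoint (hP : IsDist P) (h : IsMixture (fst2 P) w r) :
    IsDist (mixtureJoint P w r) := by
  refine ⟨fun x => mul_nonneg (mul_nonneg (h.nonneg _) ((h.isDist _).1 _))
    ((isDist_condDist hP _).1 _), ?_⟩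
  rw [← (isDist_fst2 hP).2, ← margZ_mixtureJoint hP h]
  simp only [margZ, Fintype.sum_prod_type]
  exact sum_comm

theorem markov_mixtureJoint (hP : IsDist P) (h : IsMixture (fst2 P) w r) :
    Markov (mixtureJoint P w r) := by
  intro j z k
  rw [margZ_mixtureJoint hP h, margZK_mixtureJoint hP h, margUZ_mixtureJoint hP,
    ← fst2_mul_condDist hP z k]
  simp only [mixtureJoint]
  ring

theorem mutInfo_margUZ_mixtureJoint (hP : IsDist P) (h : IsMixture (fst2 P) w r) :
    mutInfo (margUZ (mixtureJoint P w r)) = (mixtureRates P w r).1 := by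
  have hr : ∀ j, ∑ z, r j z = 1 := fun j => (h.isDist j).2
  have hsnd : snd2 (fun x : J × Z => w x.1 * r x.1 x.2) = fst2 P := funext h.sum_mul_apply
  rw [margUZ_mixtureJoint hP, mutInfo, fst2_mul_of_sum_eq_one w hr, hsnd,
    ent_mul_of_sum_eq_one w hr, mixtureRates]
  ring

theorem condEnt_margUK_mixtureJoint (hP : IsDist P) (h : IsMixture (fst2 P) w r) :
    condEnt (margUK (mixtureJoint P w r)) = (mixtureRates P w r).2 := by
  have hr : ∀ j, ∑ k, outputDist P (r j) k = 1 := fun j => (isDist_outputDist hP (h.isDist j)).2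
  rw [margUK_mixtureJoint, condEnt, fst2_mul_of_sum_eq_one w hr, ent_mul_of_sum_eq_one w hr,
    mixtureRates]
  ring

theorem isDist_margUZ {q : J × Z × X → ℝ} (hq : IsDist q) : IsDist (margUZ q) :=
  ⟨fun x => sum_nonneg fun k _ => hq.1 _, by
    rw [← hq.2]; simp only [margUZ, Fintype.sum_prod_type]⟩

theorem margZ_eq_fst2 {q : J × Z × X → ℝ} (hZK : ∀ z k, margZK q (z, k) = P (z, k)) :
    margZ q = fst2 P := by
  funext z
  simp only [margZ, fst2, ← hZK, margZK]
  exact sum_comm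

theorem isMixture_condDist_margUZ {q : J × Z × X → ℝ} (hq : IsDist q)
    (hZK : ∀ z k, margZK q (z, k) = P (z, k)) :
    IsMixture (fst2 P) (fst2 (margUZ q)) (condDist (margUZ q)) := by
  refine ⟨(isDist_fst2 (isDist_margUZ hq)).1, isDist_condDist (isDist_margUZ hq), ?_⟩
  funext z
  simp only [Finset.sum_apply, Pi.smul_apply, smul_eq_mul, fst2_mul_condDist (isDist_margUZ hq)]
  exact congrFun (margZ_eq_fst2 hZK) z

theorem eq_mixtureJoint (hP : IsDist P) {q : J × Z × X → ℝ} (hq : IsDist q) (hM : Markov q)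
    (hZK : ∀ z k, margZK q (z, k) = P (z, k)) :
    q = mixtureJoint P (fst2 (margUZ q)) (condDist (margUZ q)) := by
  funext ⟨u, z, k⟩
  simp only [mixtureJoint, fst2_mul_condDist (isDist_margUZ hq)]
  by_cases hz : fst2 P z = 0
  · have hUZ : margUZ q (u, z) = 0 := (isDist_margUZ hq).eq_zero_of_snd2_eq_zero
      ((congrFun (margZ_eq_fst2 hZK) z).trans hz) u
    rw [hUZ, zero_mul]
    exact (sum_eq_zero_iff_of_nonneg fun k _ => hq.1 _).1 hUZ k (mem_univ k)
  · apply mul_right_cancel₀ hz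
    have := hM u z k
    rw [margZ_eq_fst2 hZK, hZK, ← fst2_mul_condDist hP z k] at this
    rw [this]
    ring

end Mixture

section MixtureCombination

variable {J J₁ J₂ Z X : Type} [Fintype J] [Fintype J₁] [Fintype J₂] [Fintype Z] [Fintype X]
  {w₁ : J₁ → ℝ} {w₂ : J₂ → ℝ} {r₁ : J₁ → Z → ℝ} {r₂ : J₂ → Z → ℝ}

theorem IsMixture.sum_elim {p : Z → ℝ}
    (h₁ : IsMixture p w₁ r₁) (h₂ : IsMixture p w₂ r₂) {a b : ℝ} (ha : 0 ≤ a) (hb : 0 ≤ b)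
    (hab : a + b = 1) : IsMixture p (Sum.elim (a • w₁) (b • w₂)) (Sum.elim r₁ r₂) := by
  refine ⟨?_, fun j => j.rec h₁.isDist h₂.isDist, ?_⟩
  · rintro (j | j)
    · exact mul_nonneg ha (h₁.nonneg j)
    · exact mul_nonneg hb (h₂.nonneg j)
  · simp [Fintype.sum_sum_type, mul_smul, ← smul_sum, h₁.sum_smul, h₂.sum_smul, ← add_smul,
      hab]

theorem mixtureRates_sum_elim {P : Z × X → ℝ} {a b : ℝ}
    (hab : a + b = 1) :
    mixtureRates P (Sum.elim (a • w₁) (b • w₂)) (Sum.elim r₁ r₂) =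
      a • mixtureRates P w₁ r₁ + b • mixtureRates P w₂ r₂ := by
  ext <;> simp only [mixtureRates, Fintype.sum_sum_type, Sum.elim_inl, Sum.elim_inr,
    Pi.smul_apply, smul_eq_mul, Prod.fst_add, Prod.snd_add, Prod.smul_fst, Prod.smul_snd,
    mul_assoc, ← mul_sum]
  linear_combination -(ent (fst2 P)) * hab

theorem IsMixture.exists_card_support_le {p : Z → ℝ} {w : J → ℝ} {r : J → Z → ℝ}
    (h : IsMixture p w r) (c : J → ℝ) :
    ∃ w' : J → ℝ, IsMixture p w' r ∧ #{j | w' j ≠ 0} ≤ Fintype.card Z + 1 ∧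
      ∑ j, w' j * ent (r j) = ∑ j, w j * ent (r j) ∧ ∑ j, w' j * c j ≤ ∑ j, w j * c j := by
  obtain ⟨w', hw', hcard, hf, hc⟩ := exists_nonneg_card_support_le_finrank
    (f := fun j => (r j, ent (r j))) (φ := (∑ z, LinearMap.proj z) ∘ₗ LinearMap.fst ℝ _ ℝ)
    (fun j => by simpa using (h.isDist j).2) c h.nonneg
  rw [finrank_prod, finrank_fintype_fun_eq_card, finrank_self] at hcard
  simp only [Prod.ext_iff, Prod.fst_sum, Prod.snd_sum, Prod.smul_mk, smul_eq_mul] at hf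
  exact ⟨w', ⟨hw', h.isDist, hf.1.trans h.sum_smul⟩, hcard, hf.2, hc⟩

end MixtureCombination

section Topology

variable {J Z X : Type} [Fintype J] [Fintype Z] [Fintype X]

theorem continuous_ent {A : Type} [Fintype A] : Continuous (ent : (A → ℝ) → ℝ) := by
  unfold ent
  fun_prop

theorem isCompact_setOf_isMixture {p : Z → ℝ} (hp : IsDist p) :
    IsCompact {x : (J → ℝ) × (J → Z → ℝ) | IsMixture p x.1 x.2} := by
  have hsub : {x : (J → ℝ) × (J → Z → ℝ) | IsMixture p x.1 x.2} ⊆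
      stdSimplex ℝ J ×ˢ Set.univ.pi fun _ => stdSimplex ℝ Z := fun x h =>
    ⟨⟨h.nonneg, h.sum_eq.trans hp.2⟩, fun j _ => h.isDist j⟩
  have hclosed : IsClosed {x : (J → ℝ) × (J → Z → ℝ) | IsMixture p x.1 x.2} := by
    have : {x : (J → ℝ) × (J → Z → ℝ) | IsMixture p x.1 x.2} =
        (Set.Ici 0 ×ˢ Set.univ.pi fun _ => stdSimplex ℝ Z) ∩
          {x : (J → ℝ) × (J → Z → ℝ) | ∑ j, x.1 j • x.2 j = p} := by
      ext x
      exact ⟨fun h => ⟨⟨h.nonneg, fun j _ => h.isDist j⟩, h.sum_smul⟩,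
        fun h => ⟨h.1.1, fun j => h.1.2 j trivial, h.2⟩⟩
    rw [this]
    exact (isClosed_Ici.prod (isClosed_set_pi fun _ _ => isClosed_stdSimplex ℝ Z)).inter
      (isClosed_eq (by fun_prop) continuous_const)
  exact ((isCompact_stdSimplex ℝ J).prod (isCompact_univ_pi fun _ => isCompact_stdSimplex ℝ Z)
    ).of_isClosed_subset hclosed hsub

theorem continuous_mixtureRates (P : Z × X → ℝ) :
    Continuous fun x : (J → ℝ) × (J → Z → ℝ) => mixtureRates P x.1 x.2 := by
  have : Continuous (outputDist P) := by unfold outputDist; fun_prop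
  unfold mixtureRates
  have := continuous_ent (A := Z)
  have := continuous_ent (A := X)
  fun_prop

end Topology

section RateRegion

variable {X Z : Type} [Fintype X] [Fintype Z] {pK : X → ℝ} {W : X → Z → ℝ}

theorem isDist_pJoint_swap (hK : IsDist pK) (hW : IsChannel W) :
    IsDist (pJoint pK W ∘ Prod.swap) :=
  ⟨fun x => mul_nonneg (hK.1 _) ((hW _).1 _), by
    simp [Fintype.sum_prod_type_right, pJoint, ← mul_sum, (hW _).2, hK.2]⟩

theorem exists_isMixture_of_mem_region (hK : IsDist pK) (hW : IsChannel W) {x : ℝ × ℝ}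
    (hx : x ∈ Region pK W) :
    0 ≤ x ∧ ∃ m ≤ Fintype.card Z + 1, ∃ (w : Fin m → ℝ) (r : Fin m → Z → ℝ),
      IsMixture (fst2 (pJoint pK W ∘ Prod.swap)) w r ∧
        mixtureRates (pJoint pK W ∘ Prod.swap) w r ≤ x := by
  obtain ⟨m, hm, q, hq, hM, hZK, h₁, h₂, hI, hH⟩ := hx
  have hP := isDist_pJoint_swap hK hW
  have hmix := isMixture_condDist_margUZ (P := pJoint pK W ∘ Prod.swap) hq hZK
  rw [eq_mixtureJoint hP hq hM hZK, mutInfo_margUZ_mixtureJoint hP hmix] at hI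
  rw [eq_mixtureJoint hP hq hM hZK, condEnt_margUK_mixtureJoint hP hmix] at hH
  exact ⟨⟨h₁, h₂⟩, m, hm, _, _, hmix, hI, hH⟩

theorem mem_region_of_isMixture (hK : IsDist pK) (hW : IsChannel W) {J : Type} [Fintype J]
    {w : J → ℝ} {r : J → Z → ℝ} (hJ : #{j | w j ≠ 0} ≤ Fintype.card Z + 1)
    (h : IsMixture (fst2 (pJoint pK W ∘ Prod.swap)) w r) {x : ℝ × ℝ} (hx₀ : 0 ≤ x)
    (hx : mixtureRates (pJoint pK W ∘ Prod.swap) w r ≤ x) : x ∈ Region pK W := by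
  have hP := isDist_pJoint_swap hK hW
  set S : Finset J := {j | w j ≠ 0}
  let σ : Fin #S → J := fun i => (S.equivFin.symm i).1
  have hsum : ∀ {M : Type} [AddCommMonoid M] (g : J → M), (∀ j, w j = 0 → g j = 0) →
      ∑ i, g (σ i) = ∑ j, g j := fun g hg =>
    Fintype.sum_of_injective σ (Subtype.val_injective.comp S.equivFin.symm.injective) _ _
      (fun j hj => hg j (by_contra fun hw => hj ⟨S.equivFin ⟨j, by simpa [S] using hw⟩,
        by simp [σ]⟩)) fun _ => rfl
  have hmix : IsMixture (fst2 (pJoint pK W ∘ Prod.swap)) (w ∘ σ) (r ∘ σ) :=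
    ⟨fun i => h.nonneg _, fun i => h.isDist _,
      (hsum (fun j => w j • r j) fun j hj => by simp [hj]).trans h.sum_smul⟩
  have hrates : mixtureRates (pJoint pK W ∘ Prod.swap) (w ∘ σ) (r ∘ σ) =
      mixtureRates (pJoint pK W ∘ Prod.swap) w r := by
    simp only [mixtureRates, Function.comp_apply]
    rw [hsum (fun j => w j * ent (r j)) fun j hj => by simp [hj],
      hsum (fun j => w j * ent (outputDist _ (r j))) fun j hj => by simp [hj]]
  refine ⟨#S, hJ, _, isDist_mixtureJoint hP hmix, markov_mixtureJoint hP hmix,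
    margZK_mixtureJoint hP hmix, hx₀.1, hx₀.2, ?_, ?_⟩
  · rw [mutInfo_margUZ_mixtureJoint hP hmix, hrates]; exact hx.1
  · rw [condEnt_margUK_mixtureJoint hP hmix, hrates]; exact hx.2

def achievableRates (P : Z × X → ℝ) : Set (ℝ × ℝ) :=
  ⋃ m ≤ Fintype.card Z + 1,
    (fun x : (Fin m → ℝ) × (Fin m → Z → ℝ) => mixtureRates P x.1 x.2) ''
      {x | IsMixture (fst2 P) x.1 x.2}

theorem isCompact_achievableRates {P : Z × X → ℝ} (hP : IsDist P) :
    IsCompact (achievableRates P) :=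
  (Set.finite_le_nat _).isCompact_biUnion fun _ _ =>
    (isCompact_setOf_isMixture (isDist_fst2 hP)).image (continuous_mixtureRates P)

theorem region_eq (hK : IsDist pK) (hW : IsChannel W) :
    Region pK W = Set.Ici 0 ∩ (achievableRates (pJoint pK W ∘ Prod.swap) + Set.Ici 0) := by
  ext x
  constructor
  · intro hx
    obtain ⟨hx₀, m, hm, w, r, h, hle⟩ := exists_isMixture_of_mem_region hK hW hx
    exact ⟨hx₀, _, Set.mem_biUnion hm ⟨(w, r), h, rfl⟩, x - _, sub_nonneg.2 hle,
      add_sub_cancel _ _⟩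
  · rintro ⟨hx₀, _, hy, z, hz, rfl⟩
    obtain ⟨m, hm, ⟨w, r⟩, h, rfl⟩ := Set.mem_iUnion₂.1 hy
    refine mem_region_of_isMixture hK hW ?_ h hx₀ (le_add_of_nonneg_right hz)
    exact (card_le_univ _).trans (by simpa using hm)

theorem isClosed_region (hK : IsDist pK) (hW : IsChannel W) : IsClosed (Region pK W) := by
  rw [region_eq hK hW]
  exact isClosed_Ici.inter
    (isClosed_Ici.add_left_of_isCompact (isCompact_achievableRates (isDist_pJoint_swap hK hW)))

theorem convex_region (hK : IsDist pK) (hW : IsChannel W) : Convex ℝ (Region pK W) := by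
  intro x hx y hy a b ha hb hab
  obtain ⟨hx₀, m₁, -, w₁, r₁, h₁, hx⟩ := exists_isMixture_of_mem_region hK hW hx
  obtain ⟨hy₀, m₂, -, w₂, r₂, h₂, hy⟩ := exists_isMixture_of_mem_region hK hW hy
  obtain ⟨w, hw, hcard, hent, hc⟩ := (h₁.sum_elim h₂ ha hb hab).exists_card_support_le
    fun j => ent (outputDist (pJoint pK W ∘ Prod.swap) (Sum.elim r₁ r₂ j))
  refine mem_region_of_isMixture hK hW hcard hw
    (add_nonneg (smul_nonneg ha hx₀) (smul_nonneg hb hy₀)) ?_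
  calc mixtureRates _ w (Sum.elim r₁ r₂)
      ≤ mixtureRates _ (Sum.elim (a • w₁) (b • w₂)) (Sum.elim r₁ r₂) :=
        ⟨by simp only [mixtureRates, hent, le_refl], hc⟩
    _ = a • mixtureRates _ w₁ r₁ + b • mixtureRates _ w₂ r₂ := mixtureRates_sum_elim hab
    _ ≤ a • x + b • y :=
        add_le_add (smul_le_smul_of_nonneg_left hx ha) (smul_le_smul_of_nonneg_left hy hb)

end RateRegion

theorem region_isClosed_convex_subset_quadrant_general
    {X Z : Type} [Fintype X] [Fintype Z]
    (pK : X → ℝ) (hK : IsDist pK) (W : X → Z → ℝ) (hW : IsChannel W) :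
    IsClosed (Region pK W) ∧ Convex ℝ (Region pK W) ∧
      Region pK W ⊆ {r : ℝ × ℝ | 0 ≤ r.1 ∧ 0 ≤ r.2} :=
  ⟨isClosed_region hK hW, convex_region hK hW, fun _ ⟨_, _, _, _, _, _, h₁, h₂, _⟩ => ⟨h₁, h₂⟩⟩

/-- The region `𝓡(p_K, W)` is a closed convex subset of the nonnegative
quadrant `ℝ₊² = {(R_A, R) : R_A ≥ 0, R ≥ 0}`. -/
theorem region_isClosed_convex_subset_quadrant
    {X Z : Type} [Field X] [Fintype X] [Fintype Z]
    (pK : X → ℝ) (hK : IsDist pK) (W : X → Z → ℝ) (hW : IsChannel W) :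
    IsClosed (Region pK W) ∧ Convex ℝ (Region pK W) ∧
      Region pK W ⊆ {r : ℝ × ℝ | 0 ≤ r.1 ∧ 0 ≤ r.2} :=
  region_isClosed_convex_subset_quadrant_general pK hK W hW

end

end SCA
end

section
/- For R ≥ 0 and a probability distribution p_X on a finite set 𝒳, the exponent E(R|p_X) is strictly positive if and only if R > H(X), where H(X) is the entropy of p_X. -/
open scoped BigOperators
open Real Classical

namespace SCA

noncomputable section

lemma relEnt_self {A : Type} [Fintype A] (p : A → ℝ) : relEnt p p = 0 := by
  unfold relEnt
  apply Finset.sum_eq_zero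
  intro a _
  by_cases h : p a = 0
  · simp [h]
  · rw [div_self h, Real.log_one, mul_zero]

lemma gibbs_term_nonneg (qa pa : ℝ) (hq : 0 ≤ qa) (hp : 0 ≤ pa) (habs : pa = 0 → qa = 0) :
    0 ≤ pa - qa + qa * Real.log (qa / pa) := by
  rcases eq_or_lt_of_le hq with h | h
  · simp [← h, hp]
  · have hpa : 0 < pa := by
      rcases eq_or_lt_of_le hp with h0 | h0
      · exact absurd (habs h0.symm) (ne_of_gt h)
      · exact h0
    have hlog : Real.log (pa / qa) ≤ pa / qa - 1 :=
      Real.log_le_sub_one_of_pos (by positivity)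
    have h2 : qa * Real.log (pa / qa) ≤ pa - qa := by
      calc qa * Real.log (pa / qa) ≤ qa * (pa / qa - 1) :=
            mul_le_mul_of_nonneg_left hlog (le_of_lt h)
        _ = pa - qa := by field_simp
    have hlogsym : Real.log (qa / pa) = - Real.log (pa / qa) := by
      rw [← Real.log_inv]
      congr 1
      field_simp
    nlinarith [h2]

lemma gibbs_term_eq (qa pa : ℝ) (hq : 0 ≤ qa) (hp : 0 ≤ pa) (habs : pa = 0 → qa = 0)
    (heq : pa - qa + qa * Real.log (qa / pa) = 0) : qa = pa := by
  rcases eq_or_lt_of_le hq with h | h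
  · rw [← h] at heq ⊢
    simp at heq
    rw [heq]
  · have hpa : 0 < pa := by
      rcases eq_or_lt_of_le hp with h0 | h0
      · exact absurd (habs h0.symm) (ne_of_gt h)
      · exact h0
    by_contra hne
    have hne' : pa / qa ≠ 1 := by
      intro h1
      apply hne
      field_simp at h1
      exact h1.symm
    have hlog : Real.log (pa / qa) < pa / qa - 1 :=
      Real.log_lt_sub_one_of_pos (by positivity) hne'
    have h2 : qa * Real.log (pa / qa) < pa - qa := by
      calc qa * Real.log (pa / qa) < qa * (pa / qa - 1) :=
            (mul_lt_mul_iff_right₀ h).mpr hlog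
        _ = pa - qa := by field_simp
    have hlogsym : Real.log (qa / pa) = - Real.log (pa / qa) := by
      rw [← Real.log_inv]
      congr 1
      field_simp
    nlinarith [h2]

lemma relEnt_eq_gibbs_sum {A : Type} [Fintype A] (q p : A → ℝ)
    (hq : ∑ a, q a = 1) (hp : ∑ a, p a = 1) :
    relEnt q p = ∑ a, (p a - q a + q a * Real.log (q a / p a)) := by
  unfold relEnt
  rw [Finset.sum_add_distrib, Finset.sum_sub_distrib, hq, hp]
  ring

lemma relEnt_nonneg {A : Type} [Fintype A] (q p : A → ℝ) (hq : IsDist q) (hp : IsDist p)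
    (habs : ∀ a, p a = 0 → q a = 0) : 0 ≤ relEnt q p := by
  rw [relEnt_eq_gibbs_sum q p hq.2 hp.2]
  exact Finset.sum_nonneg fun a _ => gibbs_term_nonneg (q a) (p a) (hq.1 a) (hp.1 a) (habs a)

lemma eq_of_relEnt_eq_zero {A : Type} [Fintype A] (q p : A → ℝ) (hq : IsDist q)
    (hp : IsDist p) (habs : ∀ a, p a = 0 → q a = 0) (h0 : relEnt q p = 0) : q = p := by
  rw [relEnt_eq_gibbs_sum q p hq.2 hp.2] at h0
  funext a
  have := (Finset.sum_eq_zero_iff_of_nonneg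
    (fun a _ => gibbs_term_nonneg (q a) (p a) (hq.1 a) (hp.1 a) (habs a))).mp h0 a
    (Finset.mem_univ a)
  exact gibbs_term_eq (q a) (p a) (hq.1 a) (hp.1 a) (habs a) this

/-- For `R ≥ 0` and a distribution `p_X` on a finite set `𝓧`, the exponent
`E(R|p_X)` is strictly positive if and only if `R > H(X)`. -/
theorem Eexp_pos_iff
    {X : Type} [Fintype X] (R : ℝ) (hR : 0 ≤ R) (pX : X → ℝ) (hX : IsDist pX) :
    0 < Eexp R pX ↔ ent pX < R := by
  set T : Set ℝ := { y | ∃ q : X → ℝ, IsDist q ∧ (∀ x, pX x = 0 → q x = 0) ∧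
    y = max (R - ent q) 0 + relEnt q pX } with hT
  have hTne : T.Nonempty := ⟨max (R - ent pX) 0 + relEnt pX pX, pX, hX, fun x h => h, rfl⟩
  have hTbdd : BddBelow T := by
    refine ⟨0, fun y hy => ?_⟩
    obtain ⟨q, hqd, hqa, rfl⟩ := hy
    have := relEnt_nonneg q pX hqd hX hqa
    have := le_max_right (R - ent q) 0
    linarith
  constructor
  · intro hpos
    by_contra hle
    push_neg at hle
    have h0T : (0 : ℝ) ∈ T := by
      refine ⟨pX, hX, fun x h => h, ?_⟩
      rw [relEnt_self, max_eq_right (by linarith)]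
      ring
    have : Eexp R pX ≤ 0 := csInf_le hTbdd h0T
    linarith
  · intro hlt
    -- compactness argument
    set S : Set (X → ℝ) := { q | IsDist q ∧ ∀ x, pX x = 0 → q x = 0 } with hS
    set F : (X → ℝ) → ℝ := fun q =>
      max (R - ∑ a, Real.negMulLog (q a)) 0 +
        ∑ a, (q a * Real.log (q a) - q a * Real.log (pX a)) with hF
    have hFcont : Continuous F := by
      apply Continuous.add
      · exact (continuous_const.sub (continuous_finset_sum _ fun a _ =>
          Real.continuous_negMulLog.comp (continuous_apply a))).max continuous_const
      · exact continuous_finset_sum _ fun a _ =>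
          ((Real.continuous_mul_log.comp (continuous_apply a)).sub
            ((continuous_apply a).mul continuous_const))
    have hFeq : ∀ q ∈ S, F q = max (R - ent q) 0 + relEnt q pX := by
      intro q hq
      have : relEnt q pX = ∑ a, (q a * Real.log (q a) - q a * Real.log (pX a)) := by
        unfold relEnt
        apply Finset.sum_congr rfl
        intro a _
        by_cases hqa : q a = 0
        · simp [hqa]
        · have hpa : pX a ≠ 0 := fun h => hqa (hq.2 a h)
          rw [Real.log_div hqa hpa, mul_sub]
      rw [hF, this]
      rfl
    have hSclosed : IsClosed S := by
      have h1 : IsClosed {q : X → ℝ | ∀ a, 0 ≤ q a} := by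
        have : {q : X → ℝ | ∀ a, 0 ≤ q a} = ⋂ a, {q | 0 ≤ q a} := by
          ext q; simp
        rw [this]
        exact isClosed_iInter fun a => isClosed_le continuous_const (continuous_apply a)
      have h2 : IsClosed {q : X → ℝ | ∑ a, q a = 1} :=
        isClosed_eq (continuous_finset_sum _ fun a _ => continuous_apply a) continuous_const
      have h3 : IsClosed {q : X → ℝ | ∀ x, pX x = 0 → q x = 0} := by
        have : {q : X → ℝ | ∀ x, pX x = 0 → q x = 0} =
            ⋂ x, {q | pX x = 0 → q x = 0} := by
          ext q; simp
        rw [this]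
        refine isClosed_iInter fun x => ?_
        by_cases hx : pX x = 0
        · have : {q : X → ℝ | pX x = 0 → q x = 0} = {q | q x = 0} := by
            ext q; simp [hx]
          rw [this]
          exact isClosed_eq (continuous_apply x) continuous_const
        · have : {q : X → ℝ | pX x = 0 → q x = 0} = Set.univ := by
            ext q; simp [hx]
          rw [this]
          exact isClosed_univ
      have : S = ({q : X → ℝ | ∀ a, 0 ≤ q a} ∩ {q | ∑ a, q a = 1}) ∩
          {q | ∀ x, pX x = 0 → q x = 0} := by
        ext q
        simp only [hS, Set.mem_setOf_eq, Set.mem_inter_iff, IsDist]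
      rw [this]
      exact (h1.inter h2).inter h3
    have hScompact : IsCompact S := by
      refine IsCompact.of_isClosed_subset (isCompact_Icc
        (a := fun _ : X => (0:ℝ)) (b := fun _ => 1)) hSclosed ?_
      intro q hq
      constructor
      · intro a; exact hq.1.1 a
      · intro a
        rw [← hq.1.2]
        exact Finset.single_le_sum (fun b _ => hq.1.1 b) (Finset.mem_univ a)
    have hSne : S.Nonempty := ⟨pX, hX, fun x h => h⟩
    obtain ⟨q₀, hq₀S, hmin⟩ := hScompact.exists_isMinOn hSne hFcont.continuousOn
    have hq₀pos : 0 < F q₀ := by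
      rw [hFeq q₀ hq₀S]
      have hre : 0 ≤ relEnt q₀ pX := relEnt_nonneg q₀ pX hq₀S.1 hX hq₀S.2
      rcases eq_or_lt_of_le hre with h0 | h0
      · have hq₀eq : q₀ = pX := eq_of_relEnt_eq_zero q₀ pX hq₀S.1 hX hq₀S.2 h0.symm
        rw [hq₀eq, relEnt_self]
        have : R - ent pX ≤ max (R - ent pX) 0 := le_max_left _ _
        linarith
      · have : (0:ℝ) ≤ max (R - ent q₀) 0 := le_max_right _ _
        linarith
    have hlow : ∀ y ∈ T, F q₀ ≤ y := by
      intro y hy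
      obtain ⟨q, hqd, hqa, rfl⟩ := hy
      have hqS : q ∈ S := ⟨hqd, hqa⟩
      rw [← hFeq q hqS]
      exact hmin hqS
    have : F q₀ ≤ Eexp R pX := le_csInf hTne hlow
    linarith

end

end SCA
end

section
/- For any affine encoder φ^(n) and any adversary encoder φ_A^(n), setting C̃^m := φ^(n)(X^n ⊕ K^n), K̃^m := φ^(n)(K^n) and M_A^(n) := φ_A^(n)(Z^n), the mutual information leakage satisfies I(C̃^m, M_A^(n); X^n) ≤ D(p_{K̃^m|M_A^(n)} || p_{V^m} | p_{M_A^(n)}), where p_{V^m} is the uniform distribution over 𝒳^m. -/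
open scoped BigOperators
open Real Classical

namespace SCA

noncomputable section

lemma sum_prod_eq_one {I A : Type} [DecidableEq I] [Fintype I] [Fintype A] (f : I → A → ℝ)
    (h : ∀ i, ∑ a, f i a = 1) : ∑ x : I → A, ∏ i, f i (x i) = 1 := by
  rw [← Fintype.prod_sum f]
  simp [h]

lemma sum_ite_eq_cond {C : Type} [Fintype C] (P : C → Prop) [∀ c, Decidable (P c)] (c0 : C)
    (hP : ∀ c, P c ↔ c = c0) (g : ℝ) : (∑ c, if P c then g else 0) = g := by
  rw [Finset.sum_eq_single c0]
  · rw [if_pos ((hP c0).mpr rfl)]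
  · intro c _ hc
    rw [if_neg (fun h => hc ((hP c).mp h))]
  · intro h
    exact absurd (Finset.mem_univ c0) h

lemma gibbs {I : Type} [Fintype I] (p u : I → ℝ) (hp : ∀ i, 0 ≤ p i)
    (hps : ∑ i, p i = 1) (hu : ∀ i, 0 ≤ u i) (hus : ∑ i, u i ≤ 1)
    (h : ∀ i, 0 < p i → 0 < u i) :
    ∑ i, p i * Real.log (u i / p i) ≤ 0 := by
  have step : ∀ i, p i * Real.log (u i / p i) ≤ u i - p i := by
    intro i
    rcases (hp i).eq_or_lt with h0 | h0
    · simp [← h0, hu i]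
    · have hui := h i h0
      have hd : 0 < u i / p i := div_pos hui h0
      have := Real.log_le_sub_one_of_pos hd
      have h2 : p i * Real.log (u i / p i) ≤ p i * (u i / p i - 1) :=
        mul_le_mul_of_nonneg_left this (le_of_lt h0)
      calc p i * Real.log (u i / p i) ≤ p i * (u i / p i - 1) := h2
        _ = u i - p i := by field_simp
  calc ∑ i, p i * Real.log (u i / p i) ≤ ∑ i, (u i - p i) := Finset.sum_le_sum (fun i _ => step i)
    _ = (∑ i, u i) - 1 := by rw [Finset.sum_sub_distrib, hps]
    _ ≤ 0 := by linarith

lemma core {V C M : Type} [Fintype V] [Fintype C] [Fintype M] [AddCommGroup C]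
    (pV : V → ℝ) (q : C × M → ℝ) (L : V → C) (N : ℝ)
    (hpV0 : ∀ v, 0 ≤ pV v) (hpV1 : ∑ v, pV v = 1)
    (hq0 : ∀ ca, 0 ≤ q ca) (hq1 : ∑ ca, q ca = 1)
    (hN : (Fintype.card C : ℝ) = N) :
    mutInfo (fun p : V × (C × M) => pV p.1 * q (p.2.1 - L p.1, p.2.2)) ≤
      ∑ ca : C × M, q ca * Real.log (q ca / (∑ c, q (c, ca.2)) * N) := by
  classical
  have hNe : Nonempty C := ⟨0⟩
  have hNpos : (0:ℝ) < N := by rw [← hN]; exact_mod_cast Fintype.card_pos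
  set J : V × (C × M) → ℝ := fun p => pV p.1 * q (p.2.1 - L p.1, p.2.2) with hJ
  set r : M → ℝ := fun a => ∑ c, q (c, a) with hr
  set P : C × M → ℝ := snd2 J with hP
  have hshift : ∀ (f : C → ℝ) (v : C), ∑ c, f (c - v) = ∑ c, f c := by
    intro f v
    simpa using Equiv.sum_comp (Equiv.subRight v) f
  have hqsum2 : ∑ c, ∑ a, q (c, a) = 1 := by
    rw [← Fintype.sum_prod_type]; exact hq1
  have hsumq_shift : ∀ v : V, ∑ ca : C × M, q (ca.1 - L v, ca.2) = 1 := by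
    intro v
    rw [Fintype.sum_prod_type]
    rw [hshift (fun c => ∑ a, q (c, a)) (L v)]
    exact hqsum2
  have hfst : fst2 J = pV := by
    funext v
    simp only [fst2, hJ, ← Finset.mul_sum]
    rw [hsumq_shift v, mul_one]
  have hentq2 : ∑ c, ∑ a, Real.negMulLog (q (c, a)) = ent q := by
    rw [ent, Fintype.sum_prod_type]
  have hentJ : ent J = ent pV + ent q := by
    rw [ent, Fintype.sum_prod_type]
    have : ∀ v : V, ∑ ca : C × M, Real.negMulLog (J (v, ca)) =
        Real.negMulLog (pV v) + pV v * ent q := by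
      intro v
      have e1 : ∀ ca : C × M, Real.negMulLog (J (v, ca)) =
          q (ca.1 - L v, ca.2) * Real.negMulLog (pV v) +
          pV v * Real.negMulLog (q (ca.1 - L v, ca.2)) := by
        intro ca; simp only [hJ]; exact Real.negMulLog_mul _ _
      rw [Finset.sum_congr rfl (fun ca _ => e1 ca), Finset.sum_add_distrib,
        ← Finset.sum_mul, ← Finset.mul_sum, hsumq_shift v, one_mul]
      congr 1
      rw [Fintype.sum_prod_type, hshift (fun c => ∑ a, Real.negMulLog (q (c, a))) (L v),
        hentq2]
    rw [Finset.sum_congr rfl (fun v _ => this v), Finset.sum_add_distrib, ← ent,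
      ← Finset.sum_mul, hpV1, one_mul]
  have hmut : mutInfo J = ent P - ent q := by
    rw [mutInfo, hfst, hentJ, ← hP]; ring
  -- marginal facts
  have hr0 : ∀ a, 0 ≤ r a := fun a => Finset.sum_nonneg (fun c _ => hq0 _)
  have hr1 : ∑ a, r a = 1 := by
    simp only [hr]; rw [Finset.sum_comm]; exact hqsum2
  have hP0 : ∀ ca, 0 ≤ P ca := by
    intro ca
    exact Finset.sum_nonneg (fun v _ => mul_nonneg (hpV0 v) (hq0 _))
  have hPsum_c : ∀ a, ∑ c, P (c, a) = r a := by
    intro a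
    simp only [hP, snd2, hJ]
    rw [Finset.sum_comm]
    have : ∀ v : V, ∑ c : C, pV v * q (c - L v, a) = pV v * r a := by
      intro v
      rw [← Finset.mul_sum, hshift (fun c => q (c, a)) (L v)]
    rw [Finset.sum_congr rfl (fun v _ => this v), ← Finset.sum_mul, hpV1, one_mul]
  have hPsum : ∑ ca : C × M, P ca = 1 := by
    rw [Fintype.sum_prod_type, Finset.sum_comm]
    calc ∑ a, ∑ c, P (c, a) = ∑ a, r a := Finset.sum_congr rfl (fun a _ => hPsum_c a)
      _ = 1 := hr1
  have hq_le_r : ∀ ca : C × M, q ca ≤ r ca.2 := by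
    intro ca
    have := Finset.single_le_sum (f := fun c => q (c, ca.2)) (fun c _ => hq0 _)
      (Finset.mem_univ ca.1)
    simpa [hr] using this
  have hP_le_r : ∀ ca : C × M, P ca ≤ r ca.2 := by
    intro ca
    have := Finset.single_le_sum (f := fun c => P (c, ca.2)) (fun c _ => hP0 _)
      (Finset.mem_univ ca.1)
    rw [hPsum_c] at this
    simpa using this
  -- RHS identity
  have hsum_qlogr : ∑ ca : C × M, q ca * Real.log (r ca.2) =
      ∑ a, r a * Real.log (r a) := by
    rw [Fintype.sum_prod_type, Finset.sum_comm]
    refine Finset.sum_congr rfl (fun a _ => ?_)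
    show (∑ c : C, q (c, a) * Real.log (r a)) = r a * Real.log (r a)
    rw [← Finset.sum_mul]
  have hRHS : ∑ ca : C × M, q ca * Real.log (q ca / r ca.2 * N) =
      (∑ ca : C × M, q ca * Real.log (q ca)) - (∑ a, r a * Real.log (r a)) + Real.log N := by
    have term : ∀ ca : C × M, q ca * Real.log (q ca / r ca.2 * N) =
        q ca * Real.log (q ca) - q ca * Real.log (r ca.2) + q ca * Real.log N := by
      intro ca
      rcases (hq0 ca).eq_or_lt with h0 | h0
      · simp [← h0]
      · have hrpos : 0 < r ca.2 := lt_of_lt_of_le h0 (hq_le_r ca)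
        rw [Real.log_mul (div_ne_zero h0.ne' hrpos.ne') hNpos.ne',
          Real.log_div h0.ne' hrpos.ne']
        ring
    rw [Finset.sum_congr rfl (fun ca _ => term ca)]
    rw [Finset.sum_add_distrib, Finset.sum_sub_distrib, hsum_qlogr, ← Finset.sum_mul, hq1,
      one_mul]
  -- Gibbs part
  have hsum_PlogR : ∑ ca : C × M, P ca * Real.log (r ca.2) =
      ∑ a, r a * Real.log (r a) := by
    rw [Fintype.sum_prod_type, Finset.sum_comm]
    refine Finset.sum_congr rfl (fun a _ => ?_)
    show (∑ c : C, P (c, a) * Real.log (r a)) = r a * Real.log (r a)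
    rw [← Finset.sum_mul, hPsum_c]
  have hENT : ∑ ca : C × M, P ca * Real.log ((r ca.2 / N) / P ca) =
      (∑ a, r a * Real.log (r a)) - Real.log N - ∑ ca : C × M, P ca * Real.log (P ca) := by
    have term : ∀ ca : C × M, P ca * Real.log ((r ca.2 / N) / P ca) =
        P ca * Real.log (r ca.2) - P ca * Real.log N - P ca * Real.log (P ca) := by
      intro ca
      rcases (hP0 ca).eq_or_lt with h0 | h0
      · simp [← h0]
      · have hrpos : 0 < r ca.2 := lt_of_lt_of_le h0 (hP_le_r ca)
        rw [Real.log_div (div_ne_zero hrpos.ne' hNpos.ne') h0.ne',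
          Real.log_div hrpos.ne' hNpos.ne']
        ring
    rw [Finset.sum_congr rfl (fun ca _ => term ca), Finset.sum_sub_distrib,
      Finset.sum_sub_distrib, hsum_PlogR, ← Finset.sum_mul, hPsum, one_mul]
  have hu_sum : ∑ ca : C × M, r ca.2 / N ≤ 1 := by
    rw [Fintype.sum_prod_type]
    have : ∀ c : C, ∑ a, r a / N = 1 / N := by
      intro c; rw [← Finset.sum_div, hr1]
    rw [Finset.sum_congr rfl (fun c _ => this c), Finset.sum_const, Finset.card_univ,
      nsmul_eq_mul, hN]
    rw [mul_one_div, div_self hNpos.ne']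
  have hgibbs : ∑ ca : C × M, P ca * Real.log ((r ca.2 / N) / P ca) ≤ 0 := by
    refine gibbs P (fun ca => r ca.2 / N) hP0 hPsum
      (fun ca => div_nonneg (hr0 _) hNpos.le) hu_sum ?_
    intro ca hpos
    exact div_pos (lt_of_lt_of_le hpos (hP_le_r ca)) hNpos
  -- assemble
  have hentP : ent P = -∑ ca : C × M, P ca * Real.log (P ca) := by
    rw [ent, ← Finset.sum_neg_distrib]
    exact Finset.sum_congr rfl (fun ca _ => by rw [Real.negMulLog]; ring)
  have hentq : ent q = -∑ ca : C × M, q ca * Real.log (q ca) := by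
    rw [ent, ← Finset.sum_neg_distrib]
    exact Finset.sum_congr rfl (fun ca _ => by rw [Real.negMulLog]; ring)
  rw [hmut, hentP, hentq, hRHS]
  -- goal: -∑PlogP + ∑qlogq ≤ ∑qlogq - ∑rlogr + log N
  have := hENT ▸ hgibbs
  linarith [hENT, hgibbs]


/-- For any affine encoder `φ⁽ⁿ⁾` and any adversary encoder `φ_A⁽ⁿ⁾`, with
`C̃ᵐ = φ⁽ⁿ⁾(Xⁿ ⊕ Kⁿ)`, `K̃ᵐ = φ⁽ⁿ⁾(Kⁿ)` and `M_A⁽ⁿ⁾ = φ_A⁽ⁿ⁾(Zⁿ)`, we have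
`I(C̃ᵐ, M_A⁽ⁿ⁾; Xⁿ) ≤ D(p_{K̃ᵐ|M_A⁽ⁿ⁾} ‖ p_{Vᵐ} | p_{M_A⁽ⁿ⁾})`, where `p_{Vᵐ}` is the
uniform distribution over `𝓧ᵐ`. The right-hand side is written out as
`Σ_{c,a} p_{K̃ᵐ M_A}(c,a) log(p_{K̃ᵐ|M_A}(c|a)·|𝓧|ᵐ)`. -/
theorem leakage_le_condDiv_uniform
    {X Z M : Type} [Field X] [Fintype X] [Fintype Z] [Fintype M] {n m : ℕ}
    (A : Matrix (Fin n) (Fin m) X) (b : Fin m → X) (φA : (Fin n → Z) → M)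
    (pX pK : X → ℝ) (hX : IsDist pX) (hK : IsDist pK)
    (W : X → Z → ℝ) (hW : IsChannel W) :
    leakage A b φA pX pK W ≤
      ∑ ca : (Fin m → X) × M,
        (∑ k : Fin n → X, ∑ z : Fin n → Z,
          if affEnc A b k = ca.1 ∧ φA z = ca.2 then muKZ pK W k z else 0) *
        Real.log
          ((∑ k : Fin n → X, ∑ z : Fin n → Z,
              if affEnc A b k = ca.1 ∧ φA z = ca.2 then muKZ pK W k z else 0) /
            (∑ k : Fin n → X, ∑ z : Fin n → Z,
              if φA z = ca.2 then muKZ pK W k z else 0) *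
            (Fintype.card X : ℝ) ^ m) := by
  obtain ⟨hX0, hX1⟩ := hX
  obtain ⟨hK0, hK1⟩ := hK
  set q : (Fin m → X) × M → ℝ := fun ca => ∑ k : Fin n → X, ∑ z : Fin n → Z,
    if affEnc A b k = ca.1 ∧ φA z = ca.2 then muKZ pK W k z else 0 with hq
  have hμ0 : ∀ (k : Fin n → X) (z : Fin n → Z), 0 ≤ muKZ pK W k z := by
    intro k z
    exact mul_nonneg (Finset.prod_nonneg fun i _ => hK0 _)
      (Finset.prod_nonneg fun i _ => (hW (k i)).1 _)
  have hwn : ∀ k : Fin n → X, ∑ z : Fin n → Z, wn W k z = 1 := by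
    intro k
    simp only [wn]
    exact sum_prod_eq_one (fun i zi => W (k i) zi) (fun i => (hW (k i)).2)
  have hiidX : ∑ x : Fin n → X, iid pX n x = 1 := by
    simp only [iid]
    exact sum_prod_eq_one (fun _ a => pX a) (fun _ => hX1)
  have hiidK : ∑ x : Fin n → X, iid pK n x = 1 := by
    simp only [iid]
    exact sum_prod_eq_one (fun _ a => pK a) (fun _ => hK1)
  have hμ1 : ∑ k : Fin n → X, ∑ z : Fin n → Z, muKZ pK W k z = 1 := by
    calc ∑ k : Fin n → X, ∑ z : Fin n → Z, muKZ pK W k z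
        = ∑ k : Fin n → X, iid pK n k * ∑ z : Fin n → Z, wn W k z := by
          simp [muKZ, Finset.mul_sum]
      _ = ∑ k : Fin n → X, iid pK n k := by
          refine Finset.sum_congr rfl fun k _ => ?_
          rw [hwn k, mul_one]
      _ = 1 := hiidK
  have hq0 : ∀ ca, 0 ≤ q ca := by
    intro ca
    refine Finset.sum_nonneg fun k _ => Finset.sum_nonneg fun z _ => ?_
    split_ifs
    exacts [hμ0 k z, le_rfl]
  have hinner : ∀ (k : Fin n → X) (z : Fin n → Z),
      (∑ ca : (Fin m → X) × M,
        if affEnc A b k = ca.1 ∧ φA z = ca.2 then muKZ pK W k z else 0) =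
      muKZ pK W k z := by
    intro k z
    refine sum_ite_eq_cond _ (affEnc A b k, φA z) (fun ca => ?_) (muKZ pK W k z)
    constructor
    · rintro ⟨h1, h2⟩
      exact Prod.ext h1.symm h2.symm
    · rintro rfl
      exact ⟨rfl, rfl⟩
  have hq1 : ∑ ca : (Fin m → X) × M, q ca = 1 := by
    simp only [hq]
    rw [Finset.sum_comm]
    calc ∑ k : Fin n → X, ∑ ca : (Fin m → X) × M, ∑ z : Fin n → Z,
          (if affEnc A b k = ca.1 ∧ φA z = ca.2 then muKZ pK W k z else 0)
        = ∑ k : Fin n → X, ∑ z : Fin n → Z, muKZ pK W k z := by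
          refine Finset.sum_congr rfl fun k _ => ?_
          rw [Finset.sum_comm]
          exact Finset.sum_congr rfl fun z _ => hinner k z
      _ = 1 := hμ1
  have hqr : ∀ a : M, (∑ c : Fin m → X, q (c, a)) =
      ∑ k : Fin n → X, ∑ z : Fin n → Z, if φA z = a then muKZ pK W k z else 0 := by
    intro a
    simp only [hq]
    rw [Finset.sum_comm]
    refine Finset.sum_congr rfl fun k _ => ?_
    rw [Finset.sum_comm]
    refine Finset.sum_congr rfl fun z _ => ?_
    by_cases hQ : φA z = a
    · rw [if_pos hQ]
      refine sum_ite_eq_cond _ (affEnc A b k) (fun c => ?_) (muKZ pK W k z)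
      constructor
      · rintro ⟨h1, _⟩
        exact h1.symm
      · rintro rfl
        exact ⟨rfl, hQ⟩
    · rw [if_neg hQ]
      refine Finset.sum_eq_zero fun c _ => ?_
      rw [if_neg (fun h => hQ h.2)]
  have haff : ∀ x k : Fin n → X, affEnc A b (x + k) = linEnc A x + affEnc A b k := by
    intro x k
    simp [affEnc, linEnc, Matrix.add_vecMul, add_assoc]
  have hcond : ∀ (x k : Fin n → X) (c : Fin m → X),
      (affEnc A b (x + k) = c) ↔ (affEnc A b k = c - linEnc A x) := by
    intro x k c
    rw [haff x k]
    exact Iff.symm eq_sub_iff_add_eq'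
  have hJeq : leakage A b φA pX pK W =
      mutInfo (fun p : (Fin n → X) × ((Fin m → X) × M) =>
        iid pX n p.1 * q (p.2.1 - linEnc A p.1, p.2.2)) := by
    have hfun : ∀ p : (Fin n → X) × ((Fin m → X) × M),
        (∑ k : Fin n → X, ∑ z : Fin n → Z,
          if affEnc A b (p.1 + k) = p.2.1 ∧ φA z = p.2.2 then muKZ pK W k z else 0)
          = q (p.2.1 - linEnc A p.1, p.2.2) := by
      intro p
      simp only [hq]
      refine Finset.sum_congr rfl fun k _ => Finset.sum_congr rfl fun z _ => ?_
      exact if_congr (and_congr_left' (hcond p.1 k p.2.1)) rfl rfl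
    rw [leakage]
    exact congrArg mutInfo (funext fun p => by rw [hfun p])
  have hpX0 : ∀ x : Fin n → X, 0 ≤ iid pX n x :=
    fun x => Finset.prod_nonneg fun i _ => hX0 _
  have hcard : (Fintype.card (Fin m → X) : ℝ) = (Fintype.card X : ℝ) ^ m := by
    simp [Fintype.card_fun]
  rw [hJeq]
  calc mutInfo (fun p : (Fin n → X) × ((Fin m → X) × M) =>
        iid pX n p.1 * q (p.2.1 - linEnc A p.1, p.2.2))
      ≤ ∑ ca : (Fin m → X) × M, q ca * Real.log
          (q ca / (∑ c : Fin m → X, q (c, ca.2)) * (Fintype.card X : ℝ) ^ m) :=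
        core (iid pX n) q (linEnc A) ((Fintype.card X : ℝ) ^ m)
          hpX0 hiidX hq0 hq1 hcard
    _ = _ := by
        refine Finset.sum_congr rfl fun ca _ => ?_
        rw [hqr ca.2]


end

end SCA
end

section
/- For every (μ,α) ∈ [0,1]², the cardinality bound |𝒰| ≤ |𝒵| suffices to compute Ω^{(μ,α)}(p_K,W): for any joint distribution q_{UZK} of (U,Z,K), with U taking values in an arbitrary finite set, satisfying the Markov chain U↔Z↔K and q_{K|Z} = p_{K|Z}, there exists q'_{U'ZK} with |𝒰'| ≤ |𝒵|, the Markov chain U'↔Z↔K and q'_{K|Z} = p_{K|Z} such that Ω^{(μ,α)}(q'|p_Z) ≤ Ω^{(μ,α)}(q|p_Z). -/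
open scoped BigOperators
open Real Classical

namespace SCA

noncomputable section

/-- Support-reduction lemma (Carathéodory / basic-feasible-solution argument):
given nonnegative weights `lam` on a finite index set whose `v`-barycenter is fixed,
one can find new nonnegative weights supported on at most `|Z|` indices with the same
`v`-barycenter and no smaller `g`-average. -/
lemma exists_small_support {I Z : Type} [Fintype I] [Fintype Z]
    (v : I → Z → ℝ) (g : I → ℝ) :
    ∀ n : ℕ, ∀ lam : I → ℝ,
      (Finset.univ.filter fun i => lam i ≠ 0).card ≤ n →
      (∀ i, 0 ≤ lam i) → (∀ i, lam i ≠ 0 → ∑ z, v i z = 1) →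
      ∃ lam' : I → ℝ, (∀ i, 0 ≤ lam' i) ∧ (∀ i, lam i = 0 → lam' i = 0) ∧
        (∀ z, ∑ i, lam' i * v i z = ∑ i, lam i * v i z) ∧
        (∑ i, lam i * g i ≤ ∑ i, lam' i * g i) ∧
        (Finset.univ.filter fun i => lam' i ≠ 0).card ≤ Fintype.card Z := by
  intro n
  induction n with
  | zero =>
    intro lam hcard hpos hsum
    exact ⟨lam, hpos, fun i h => h, fun z => rfl, le_refl _,
      le_trans hcard (Nat.zero_le _)⟩
  | succ n ih =>
    intro lam hcard hpos hsum
    by_cases hle : (Finset.univ.filter fun i => lam i ≠ 0).card ≤ Fintype.card Z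
    · exact ⟨lam, hpos, fun i h => h, fun z => rfl, le_refl _, hle⟩
    · -- the support is too big: find a nontrivial relation and shrink it
      set T := Finset.univ.filter fun i => lam i ≠ 0 with hT
      have hTcard : Fintype.card Z < T.card := lt_of_not_ge hle
      have hdep : ¬ LinearIndependent ℝ (fun i : T => v i) := by
        intro h
        have h2 := h.fintype_card_le_finrank
        have h3 : Module.finrank ℝ (Z → ℝ) = Fintype.card Z := by simp
        rw [h3, Fintype.card_coe] at h2
        omega
      obtain ⟨c, hc, i₁, hi₁⟩ := Fintype.not_linearIndependent_iff.mp hdep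
      set cb : I → ℝ := fun i => if h : i ∈ T then c ⟨i, h⟩ else 0 with hcb
      have hcb_mem : ∀ i, cb i ≠ 0 → i ∈ T := by
        intro i h
        by_contra hmem
        exact h (by simp [hcb, hmem])
      have hcb_lam : ∀ i, cb i ≠ 0 → lam i ≠ 0 := by
        intro i h
        have := hcb_mem i h
        simp [hT] at this
        exact this
      have hcbv : ∀ z, ∑ i, cb i * v i z = 0 := by
        intro z
        have h1 : ∑ i : T, c i • v (i : I) = 0 := hc
        have h2 : (∑ i : T, c i • v (i : I)) z = 0 := by rw [h1]; rfl
        rw [Finset.sum_apply] at h2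
        have h3 : ∑ i : T, c i * v (i : I) z = 0 := by
          simpa [Pi.smul_apply, smul_eq_mul] using h2
        have h4 : ∑ i : T, cb (i : I) * v (i : I) z = 0 := by
          rw [← h3]
          apply Finset.sum_congr rfl
          intro i _
          simp [hcb, i.2]
        have h5 : ∑ i ∈ T, cb i * v i z = ∑ i : T, cb (i : I) * v (i : I) z :=
          (Finset.sum_coe_sort T (fun i => cb i * v i z)).symm
        have h6 : ∑ i, cb i * v i z = ∑ i ∈ T, cb i * v i z := by
          rw [Finset.sum_subset (Finset.subset_univ T)]
          intro x _ hx
          have : cb x = 0 := by simp [hcb, hx]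
          simp [this]
        rw [h6, h5, h4]
      have hcbsum : ∑ i, cb i = 0 := by
        have h1 : ∀ i, cb i = ∑ z, cb i * v i z := by
          intro i
          by_cases h : cb i = 0
          · simp [h]
          · rw [← Finset.mul_sum, hsum i (hcb_lam i h), mul_one]
        calc ∑ i, cb i = ∑ i, ∑ z, cb i * v i z :=
              Finset.sum_congr rfl fun i _ => h1 i
          _ = ∑ z, ∑ i, cb i * v i z := Finset.sum_comm
          _ = 0 := by simp [hcbv]
      have hcbi₁ : cb (i₁ : I) ≠ 0 := by
        have : cb (i₁ : I) = c i₁ := by simp [hcb, i₁.2]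
        rw [this]; exact hi₁
      -- choose the sign so that the g-average does not increase
      obtain ⟨d, hdv, hdsum, hdg, hdne, hdlam⟩ :
          ∃ d : I → ℝ, (∀ z, ∑ i, d i * v i z = 0) ∧ (∑ i, d i = 0) ∧
            (∑ i, d i * g i ≤ 0) ∧ (∃ i, d i ≠ 0) ∧ (∀ i, d i ≠ 0 → lam i ≠ 0) := by
        by_cases hg : ∑ i, cb i * g i ≤ 0
        · exact ⟨cb, hcbv, hcbsum, hg, ⟨i₁, hcbi₁⟩, hcb_lam⟩
        · refine ⟨fun i => -cb i, ?_, ?_, ?_, ⟨i₁, by simpa using hcbi₁⟩, ?_⟩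
          · intro z; simp [neg_mul, Finset.sum_neg_distrib, hcbv]
          · simp [Finset.sum_neg_distrib, hcbsum]
          · simp only [neg_mul, Finset.sum_neg_distrib]
            linarith
          · intro i h; exact hcb_lam i (by simpa using h)
      obtain ⟨ine, hine⟩ := hdne
      -- there is an index with d i > 0
      have hexpos : ∃ i, 0 < d i := by
        by_contra h
        push_neg at h
        have hlt : ∑ i, d i < 0 := by
          have : ∑ i, d i < ∑ i : I, (0 : ℝ) := by
            apply Finset.sum_lt_sum (fun i _ => h i)
            exact ⟨ine, Finset.mem_univ _, lt_of_le_of_ne (h ine) hine⟩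
          simpa using this
        exact absurd hdsum (ne_of_lt hlt)
      obtain ⟨ip, hip⟩ := hexpos
      set P := Finset.univ.filter fun i => 0 < d i with hP
      have hPne : P.Nonempty := ⟨ip, by simp [hP, hip]⟩
      obtain ⟨i₀, hi₀P, hmin⟩ := Finset.exists_min_image P (fun i => lam i / d i) hPne
      have hd₀ : 0 < d i₀ := by
        have := Finset.mem_filter.mp hi₀P
        exact this.2
      set s := lam i₀ / d i₀ with hs
      have hs0 : 0 ≤ s := div_nonneg (hpos i₀) hd₀.le
      set lam2 : I → ℝ := fun i => lam i - s * d i with hlam2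
      have h2pos : ∀ i, 0 ≤ lam2 i := by
        intro i
        by_cases h : 0 < d i
        · have hiP : i ∈ P := by simp [hP, h]
          have := hmin i hiP
          have h2 : s * d i ≤ lam i := by
            rw [hs] at this ⊢
            calc lam i₀ / d i₀ * d i ≤ lam i / d i * d i := by
                  apply mul_le_mul_of_nonneg_right this h.le
              _ = lam i := div_mul_cancel₀ _ (ne_of_gt h)
          simp [hlam2]; linarith
        · push_neg at h
          have : s * d i ≤ 0 := mul_nonpos_of_nonneg_of_nonpos hs0 h
          have := hpos i
          simp [hlam2]; linarith
      have h2zero : lam2 i₀ = 0 := by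
        simp [hlam2, hs, div_mul_cancel₀ _ (ne_of_gt hd₀)]
      have h2lam : ∀ i, lam2 i ≠ 0 → lam i ≠ 0 := by
        intro i h
        by_contra hli
        have hdi : d i = 0 := by
          by_contra hd
          exact (hdlam i hd) hli
        simp [hlam2, hli, hdi] at h
      have h2card : (Finset.univ.filter fun i => lam2 i ≠ 0).card ≤ n := by
        have hsub : (Finset.univ.filter fun i => lam2 i ≠ 0) ⊆ T.erase i₀ := by
          intro i hi
          simp only [Finset.mem_filter, Finset.mem_univ, true_and] at hi
          apply Finset.mem_erase.mpr
          constructor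
          · intro heq; rw [heq] at hi; exact hi h2zero
          · simp [hT]; exact h2lam i hi
        have hi₀T : i₀ ∈ T := by
          simp only [hT, Finset.mem_filter, Finset.mem_univ, true_and]
          exact hdlam i₀ (ne_of_gt hd₀)
        calc (Finset.univ.filter fun i => lam2 i ≠ 0).card
            ≤ (T.erase i₀).card := Finset.card_le_card hsub
          _ = T.card - 1 := Finset.card_erase_of_mem hi₀T
          _ ≤ n := by omega
      have h2constr : ∀ z, ∑ i, lam2 i * v i z = ∑ i, lam i * v i z := by
        intro z
        have : ∑ i, lam2 i * v i z
            = ∑ i, lam i * v i z - s * ∑ i, d i * v i z := by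
          rw [Finset.mul_sum, ← Finset.sum_sub_distrib]
          apply Finset.sum_congr rfl
          intro i _
          simp [hlam2]; ring
        rw [this, hdv z, mul_zero, sub_zero]
      have h2obj : ∑ i, lam i * g i ≤ ∑ i, lam2 i * g i := by
        have : ∑ i, lam2 i * g i
            = ∑ i, lam i * g i - s * ∑ i, d i * g i := by
          rw [Finset.mul_sum, ← Finset.sum_sub_distrib]
          apply Finset.sum_congr rfl
          intro i _
          simp [hlam2]; ring
        rw [this]
        nlinarith
      have h2sum : ∀ i, lam2 i ≠ 0 → ∑ z, v i z = 1 :=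
        fun i h => hsum i (h2lam i h)
      obtain ⟨lam', hp', hz', hc', ho', hcard'⟩ := ih lam2 h2card h2pos h2sum
      refine ⟨lam', hp', ?_, ?_, le_trans h2obj ho', hcard'⟩
      · intro i h
        apply hz'
        by_contra h2
        exact (h2lam i h2) h
      · intro z
        rw [hc' z, h2constr z]

set_option maxHeartbeats 1600000 in
/-- For every `(μ, α) ∈ [0,1]²` the cardinality bound `|𝓤| ≤ |𝓩|` suffices
to compute `Ω^{(μ,α)}(p_K, W)`: for any joint distribution `q_{UZK}`, with `U` ranging over
an arbitrary finite set, satisfying `U ↔ Z ↔ K` and `q_{K|Z} = p_{K|Z}`, there is a joint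
distribution `q'` on `𝓤' × 𝓩 × 𝓚` with `|𝓤'| ≤ |𝓩|`, the same Markov and conditional
constraints, and `Ω^{(μ,α)}(q'|p_Z) ≤ Ω^{(μ,α)}(q|p_Z)`. -/

theorem cardinality_reduction
    {X Z : Type} [Field X] [Fintype X] [Fintype Z]
    (μ α : ℝ) (hμ : μ ∈ Set.Icc (0:ℝ) 1) (hα : α ∈ Set.Icc (0:ℝ) 1)
    (pK : X → ℝ) (hK : IsDist pK) (W : X → Z → ℝ) (hW : IsChannel W)
    (U : Type) [Fintype U] (q : U × Z × X → ℝ)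
    (hq : IsDist q) (hMarkov : Markov q) (hmatch : CondMatch (pJoint pK W) q) :
    ∃ m : ℕ, m ≤ Fintype.card Z ∧ ∃ q' : Fin m × Z × X → ℝ,
      IsDist q' ∧ Markov q' ∧ CondMatch (pJoint pK W) q' ∧
      OmegaQ μ α (snd2 (pJoint pK W)) q' ≤ OmegaQ μ α (snd2 (pJoint pK W)) q := by
  classical
  -- abbreviations
  set pZb : Z → ℝ := snd2 (pJoint pK W) with hpZb
  have hqnn : ∀ p, 0 ≤ q p := hq.1
  have hqUnn : ∀ u, 0 ≤ margU q u := by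
    intro u
    exact Finset.sum_nonneg fun z _ => Finset.sum_nonneg fun k _ => hqnn _
  have hq0 : ∀ u, margU q u = 0 → ∀ z k, q (u, z, k) = 0 := by
    intro u hu z k
    have h3 : ∀ z' ∈ Finset.univ, ∑ k', q (u, z', k') = 0 :=
      (Finset.sum_eq_zero_iff_of_nonneg
        (fun z' _ => Finset.sum_nonneg fun k' _ => hqnn _)).mp hu
    exact (Finset.sum_eq_zero_iff_of_nonneg (fun k' _ => hqnn _)).mp
      (h3 z (Finset.mem_univ z)) k (Finset.mem_univ k)
  set r : U → Z → ℝ := fun u z => margUZ q (u, z) / margU q u with hr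
  set t : U → Z → X → ℝ := fun u z k => q (u, z, k) / margU q u with ht
  set g : U → ℝ := fun u => ∑ z, ∑ k,
    t u z k * Real.exp (-(omegaF μ α pZb q u z k)) with hg
  have htnn : ∀ u z k, 0 ≤ t u z k := fun u z k => div_nonneg (hqnn _) (hqUnn u)
  have hfact : ∀ u z k, q (u, z, k) = margU q u * t u z k := by
    intro u z k
    by_cases h : margU q u = 0
    · simp [ht, h, hq0 u h]
    · rw [ht]; field_simp
  have hmargUZsum : ∀ u, ∑ z, margUZ q (u, z) = margU q u := by
    intro u; simp [margUZ, margU]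
  have htk : ∀ u z, ∑ k, t u z k = r u z := by
    intro u z
    rw [ht, hr, ← Finset.sum_div]
    rfl
  have htz : ∀ u k, ∑ z, t u z k = margUK q (u, k) / margU q u := by
    intro u k
    rw [ht, ← Finset.sum_div]
    rfl
  have hrsum : ∀ u, margU q u ≠ 0 → ∑ z, r u z = 1 := by
    intro u h
    rw [hr, ← Finset.sum_div, hmargUZsum u, div_self h]
  have htsum : ∀ u, margU q u ≠ 0 → ∑ z, ∑ k, t u z k = 1 := by
    intro u h
    calc ∑ z, ∑ k, t u z k = ∑ z, r u z := Finset.sum_congr rfl fun z _ => htk u z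
      _ = 1 := hrsum u h
  -- apply the support-reduction lemma
  obtain ⟨lam', hpos', hzero', hconstr, hobj, hcard⟩ :=
    exists_small_support r g (Fintype.card U) (margU q)
      (le_trans (Finset.card_filter_le _ _) (le_of_eq Finset.card_univ))
      hqUnn hrsum
  set T := Finset.univ.filter fun i => lam' i ≠ 0 with hT
  refine ⟨T.card, hcard, ?_⟩
  set e := T.equivFin with he
  set φ : Fin T.card → U := fun j => (e.symm j : U) with hφ
  have hφT : ∀ j, φ j ∈ T := fun j => (e.symm j).2
  have hφlam : ∀ j, lam' (φ j) ≠ 0 := by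
    intro j
    have := hφT j
    rw [hT, Finset.mem_filter] at this
    exact this.2
  have hφqU : ∀ j, margU q (φ j) ≠ 0 := by
    intro j h
    exact hφlam j (hzero' _ h)
  set q' : Fin T.card × Z × X → ℝ :=
    fun p => lam' (φ p.1) * t (φ p.1) p.2.1 p.2.2 with hq'def
  -- sum over Fin T.card equals sum over U of lam'-supported functions
  have hsumφ : ∀ F : U → ℝ, (∀ i, lam' i = 0 → F i = 0) →
      ∑ j, F (φ j) = ∑ i, F i := by
    intro F hF
    have h1 : ∑ j, F (φ j) = ∑ i : T, F (i : U) := by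
      rw [hφ]
      exact Equiv.sum_comp e.symm (fun i : T => F (i : U))
    have h2 : ∑ i : T, F (i : U) = ∑ i ∈ T, F i := Finset.sum_coe_sort T F
    rw [h1, h2]
    apply Finset.sum_subset (Finset.subset_univ T)
    intro x _ hx
    rw [hT, Finset.mem_filter] at hx
    push_neg at hx
    exact hF x (hx (Finset.mem_univ x))
  -- marginals of q'
  have hmargU' : ∀ j, margU q' j = lam' (φ j) := by
    intro j
    have : margU q' j = lam' (φ j) * ∑ z, ∑ k, t (φ j) z k := by
      simp only [margU, hq'def, Finset.mul_sum]
    rw [this, htsum _ (hφqU j), mul_one]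
  have hmargUZ' : ∀ j z, margUZ q' (j, z) = lam' (φ j) * r (φ j) z := by
    intro j z
    have : margUZ q' (j, z) = lam' (φ j) * ∑ k, t (φ j) z k := by
      simp only [margUZ, hq'def, Finset.mul_sum]
    rw [this, htk]
  have hmargUK' : ∀ j k, margUK q' (j, k)
      = lam' (φ j) * (margUK q (φ j, k) / margU q (φ j)) := by
    intro j k
    have : margUK q' (j, k) = lam' (φ j) * ∑ z, t (φ j) z k := by
      simp only [margUK, hq'def, Finset.mul_sum]
    rw [this, htz]
  have hsum_r : ∀ z, ∑ i, margU q i * r i z = margZ q z := by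
    intro z
    have h1 : ∀ i, margU q i * r i z = margUZ q (i, z) := by
      intro i
      by_cases h : margU q i = 0
      · have h2 : margUZ q (i, z) = 0 := by
          simp only [margUZ]
          exact Finset.sum_eq_zero fun k _ => hq0 i h z k
        rw [h, h2, zero_mul]
      · rw [hr]; field_simp
    rw [Finset.sum_congr rfl fun i _ => h1 i]
    simp [margUZ, margZ]
  have hmargZ' : ∀ z, margZ q' z = margZ q z := by
    intro z
    have h1 : margZ q' z = ∑ j, lam' (φ j) * r (φ j) z := by
      simp only [margZ, hq'def]
      apply Finset.sum_congr rfl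
      intro j _
      rw [← Finset.mul_sum, htk]
    rw [h1, hsumφ (fun i => lam' i * r i z) (fun i h => by simp [h]),
      hconstr z, hsum_r z]
  have hkey : ∀ i z k, t i z k * margZ q z = r i z * margZK q (z, k) := by
    intro i z k
    rw [ht, hr, div_mul_eq_mul_div, div_mul_eq_mul_div, hMarkov i z k]
  have hmargZK' : ∀ z k, margZK q' (z, k) = margZK q (z, k) := by
    intro z k
    have h1 : margZK q' (z, k) = ∑ i, lam' i * t i z k := by
      simp only [margZK, hq'def]
      exact hsumφ (fun i => lam' i * t i z k) (fun i h => by simp [h])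
    by_cases hz : margZ q z = 0
    · have hqz : ∀ u k', q (u, z, k') = 0 := by
        intro u k'
        have h3 : ∀ u' ∈ Finset.univ, ∑ k', q (u', z, k') = 0 :=
          (Finset.sum_eq_zero_iff_of_nonneg
            (fun u' _ => Finset.sum_nonneg fun k'' _ => hqnn _)).mp hz
        exact (Finset.sum_eq_zero_iff_of_nonneg (fun k'' _ => hqnn _)).mp
          (h3 u (Finset.mem_univ u)) k' (Finset.mem_univ k')
      have h2 : margZK q (z, k) = 0 := by
        simp only [margZK]
        exact Finset.sum_eq_zero fun u _ => hqz u k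
      rw [h1, h2]
      apply Finset.sum_eq_zero
      intro i _
      rw [ht]
      simp [hqz i k]
    · have h2 : ∀ i, lam' i * t i z k
          = lam' i * r i z * (margZK q (z, k) / margZ q z) := by
        intro i
        have h3 : t i z k = r i z * margZK q (z, k) / margZ q z :=
          eq_div_of_mul_eq hz (hkey i z k)
        rw [h3]; ring
      rw [h1, Finset.sum_congr rfl fun i _ => h2 i, ← Finset.sum_mul,
        hconstr z, hsum_r z]
      field_simp
  -- the four required properties
  refine ⟨q', ⟨?_, ?_⟩, ?_, ?_, ?_⟩
  · intro p
    exact mul_nonneg (le_of_not_gt fun h => (hφlam p.1)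
      (by linarith [hpos' (φ p.1)])) (htnn _ _ _)
  · -- total mass one
    have hlamsum : ∑ i, lam' i = 1 := by
      have h1 : ∀ i, lam' i = ∑ z, lam' i * r i z := by
        intro i
        by_cases h : lam' i = 0
        · simp [h]
        · rw [← Finset.mul_sum, hrsum i (fun hh => h (hzero' i hh)), mul_one]
      have h2 : ∑ z, margZ q z = 1 := by
        have h3 : ∑ p : U × Z × X, q p = ∑ u, ∑ z, ∑ k, q (u, z, k) := by
          rw [Fintype.sum_prod_type]
          exact Finset.sum_congr rfl fun u _ => Fintype.sum_prod_type _
        rw [← hq.2, h3, Finset.sum_comm]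
        rfl
      calc ∑ i, lam' i = ∑ i, ∑ z, lam' i * r i z :=
            Finset.sum_congr rfl fun i _ => h1 i
        _ = ∑ z, ∑ i, lam' i * r i z := Finset.sum_comm
        _ = ∑ z, ∑ i, margU q i * r i z :=
            Finset.sum_congr rfl fun z _ => hconstr z
        _ = ∑ z, margZ q z := Finset.sum_congr rfl fun z _ => hsum_r z
        _ = 1 := h2
    have h4 : ∑ p : Fin T.card × Z × X, q' p = ∑ j, ∑ z, ∑ k, q' (j, z, k) := by
      rw [Fintype.sum_prod_type]
      exact Finset.sum_congr rfl fun j _ => Fintype.sum_prod_type _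
    rw [h4]
    have h5 : ∀ j, ∑ z, ∑ k, q' (j, z, k) = lam' (φ j) := by
      intro j
      have : ∑ z, ∑ k, q' (j, z, k) = lam' (φ j) * ∑ z, ∑ k, t (φ j) z k := by
        simp only [hq'def, Finset.mul_sum]
      rw [this, htsum _ (hφqU j), mul_one]
    rw [Finset.sum_congr rfl fun j _ => h5 j,
      hsumφ lam' (fun i h => h), hlamsum]
  · -- Markov
    intro j z k
    rw [hmargZ', hmargUZ', hmargZK']
    show lam' (φ j) * t (φ j) z k * margZ q z
      = lam' (φ j) * r (φ j) z * margZK q (z, k)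
    rw [mul_assoc, mul_assoc, hkey (φ j) z k]
  · -- CondMatch
    intro z k
    show margZK q' (z, k) * snd2 (pJoint pK W) z = margZ q' z * pJoint pK W (k, z)
    rw [hmargZK', hmargZ']
    exact hmatch z k
  · -- the Omega inequality
    have homega : ∀ j z k, omegaF μ α pZb q' j z k = omegaF μ α pZb q (φ j) z k := by
      intro j z k
      simp only [omegaF]
      rw [hmargZ', hmargUZ', hmargUK', hmargU',
        mul_div_cancel_left₀ _ (hφlam j), mul_div_cancel_left₀ _ (hφlam j)]
    have hS'eq : ∑ j, ∑ z, ∑ k, q' (j, z, k) * Real.exp (-(omegaF μ α pZb q' j z k))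
        = ∑ i, lam' i * g i := by
      have h1 : ∀ j, ∑ z, ∑ k, q' (j, z, k) * Real.exp (-(omegaF μ α pZb q' j z k))
          = lam' (φ j) * g (φ j) := by
        intro j
        rw [hg, Finset.mul_sum]
        apply Finset.sum_congr rfl
        intro z _
        rw [Finset.mul_sum]
        apply Finset.sum_congr rfl
        intro k _
        rw [homega j z k, hq'def]
        ring
      rw [Finset.sum_congr rfl fun j _ => h1 j]
      exact hsumφ (fun i => lam' i * g i) (fun i h => by simp [h])
    have hSeq : ∑ i, margU q i * g i
        = ∑ u, ∑ z, ∑ k, q (u, z, k) * Real.exp (-(omegaF μ α pZb q u z k)) := by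
      apply Finset.sum_congr rfl
      intro u _
      rw [hg, Finset.mul_sum]
      apply Finset.sum_congr rfl
      intro z _
      rw [Finset.mul_sum]
      apply Finset.sum_congr rfl
      intro k _
      rw [hfact u z k]
      ring
    have hSpos : 0 < ∑ u, ∑ z, ∑ k,
        q (u, z, k) * Real.exp (-(omegaF μ α pZb q u z k)) := by
      have h3 : ∑ p : U × Z × X, q p * Real.exp (-(omegaF μ α pZb q p.1 p.2.1 p.2.2))
          = ∑ u, ∑ z, ∑ k, q (u, z, k) * Real.exp (-(omegaF μ α pZb q u z k)) := by
        rw [Fintype.sum_prod_type]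
        exact Finset.sum_congr rfl fun u _ => Fintype.sum_prod_type _
      rw [← h3]
      obtain ⟨p₀, _, hp₀⟩ := Finset.exists_ne_zero_of_sum_ne_zero
        (by rw [hq.2]; norm_num : ∑ p : U × Z × X, q p ≠ 0)
      apply Finset.sum_pos'
      · intro p _
        exact mul_nonneg (hqnn p) (Real.exp_pos _).le
      · refine ⟨p₀, Finset.mem_univ _, ?_⟩
        exact mul_pos (lt_of_le_of_ne (hqnn p₀) (Ne.symm hp₀)) (Real.exp_pos _)
    show OmegaQ μ α pZb q' ≤ OmegaQ μ α pZb q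
    simp only [OmegaQ]
    apply neg_le_neg
    apply Real.log_le_log hSpos
    rw [hS'eq, ← hSeq]
    exact hobj

end

end SCA
end
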